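/- arXiv:1807.03676 — 7 statements merged into one kernel-verified Lean document; each statement's English description precedes it below -/
import Mathlib

section
/- Let d ≥ 1, R > 0, let F : (0,R] → [0,∞) be non-increasing, and let ω : (0,R] → [0,∞) be a non-decreasing function with lim_{h→0⁺} ω(h) = 0 and ∫₀^R F(t) ω(t) t^{d−1} dt < ∞. Then lim_{h→0⁺} ω(h) ∫_{2h}^R F(t) t^{d−1} dt = 0. -/
open MeasureTheory Set Filter Topology

/-- If `F : (0,R] → [0,∞)` is non-increasing, `ω : (0,R] → [0,∞)` is
non-decreasing with `ω(h) → 0` as `h → 0⁺`, and `∫₀^R F(t) ω(t) t^{d−1} dt < ∞`, then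
`ω(h) ∫_{2h}^R F(t) t^{d−1} dt → 0` as `h → 0⁺`. -/
theorem stmt_3 (d : ℕ) (hd : 1 ≤ d) (R : ℝ) (hR : 0 < R)
    (F ω : ℝ → ℝ)
    (hF0 : ∀ t ∈ Ioc (0:ℝ) R, 0 ≤ F t)
    (hFanti : AntitoneOn F (Ioc 0 R))
    (hω0 : ∀ t ∈ Ioc (0:ℝ) R, 0 ≤ ω t)
    (hωmono : MonotoneOn ω (Ioc 0 R))
    (hωlim : Tendsto ω (𝓝[>] 0) (𝓝 0))
    (hfin : ∫⁻ t in Ioc (0:ℝ) R, ENNReal.ofReal (F t * ω t * t ^ ((d:ℝ) - 1)) < ⊤) :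
    Tendsto (fun h : ℝ => ω h * ∫ t in Ioc (2 * h) R, F t * t ^ ((d:ℝ) - 1))
      (𝓝[>] 0) (𝓝 0) := by
  have hd1 : (0:ℝ) ≤ (d:ℝ) - 1 := by
    have : (1:ℝ) ≤ (d:ℝ) := by exact_mod_cast hd
    linarith
  set g : ℝ → ENNReal := fun t => ENNReal.ofReal (F t * ω t * t ^ ((d:ℝ) - 1)) with hgdef
  set μ₀ : Measure ℝ := volume.restrict (Ioc (0:ℝ) R) with hμ₀def
  -- measurability facts
  have hFmeas : AEMeasurable F μ₀ :=
    aemeasurable_restrict_of_antitoneOn measurableSet_Ioc hFanti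
  have hωmeas : AEMeasurable ω μ₀ :=
    aemeasurable_restrict_of_monotoneOn measurableSet_Ioc hωmono
  have hpow : Measurable fun t : ℝ => t ^ ((d:ℝ) - 1) := by fun_prop
  have hgmeas : AEMeasurable g μ₀ :=
    ((hFmeas.mul hωmeas).mul hpow.aemeasurable).ennreal_ofReal
  -- the finite measure with density g
  set μ : Measure ℝ := μ₀.withDensity (hgmeas.mk g) with hμdef
  have hμs : ∀ s : Set ℝ, MeasurableSet s → μ s = ∫⁻ t in s, g t ∂μ₀ := by
    intro s hs
    rw [hμdef, withDensity_apply _ hs]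
    exact (lintegral_congr_ae (ae_restrict_of_ae hgmeas.ae_eq_mk)).symm
  have hμfin : μ univ ≠ ⊤ := by
    rw [hμs univ MeasurableSet.univ, setLIntegral_univ]
    exact hfin.ne
  -- shrinking sequence
  have hInter : (⋂ n : ℕ, Ioc (0:ℝ) (R / (n + 1))) = ∅ := by
    ext t
    simp only [mem_iInter, mem_Ioc, mem_empty_iff_false, iff_false]
    intro hcon
    obtain ⟨ht0, -⟩ := hcon 0
    obtain ⟨n, hn⟩ := exists_nat_gt (R / t)
    have h1 : R < ↑n * t := (div_lt_iff₀ ht0).mp hn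
    have h2 : t ≤ R / (n + 1) := (hcon n).2
    have h3 : t * (n + 1) ≤ R := (le_div_iff₀ (by positivity)).mp h2
    nlinarith
  have hseq : Tendsto (fun n : ℕ => μ (Ioc (0:ℝ) (R / (n + 1)))) atTop (𝓝 0) := by
    have h1 := tendsto_measure_iInter_atTop (μ := μ)
      (s := fun n : ℕ => Ioc (0:ℝ) (R / (n + 1)))
      (fun n => measurableSet_Ioc.nullMeasurableSet)
      (fun m n hmn => Ioc_subset_Ioc_right (by
        apply div_le_div_of_nonneg_left hR.le (by positivity)
        exact_mod_cast by omega))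
      ⟨0, (lt_of_le_of_lt (measure_mono (subset_univ _)) (lt_top_iff_ne_top.mpr hμfin)).ne⟩
    rw [hInter] at h1
    simpa [Function.comp_def] using h1
  rw [NormedAddCommGroup.tendsto_nhds_zero]
  intro ε hε
  have hε2 : (0:ℝ) < ε / 2 := by linarith
  obtain ⟨n, hn⟩ := (hseq.eventually_lt_const
    (by simp [ENNReal.ofReal_pos, hε2] : (0:ENNReal) < ENNReal.ofReal (ε / 2))).exists
  set δ : ℝ := R / (n + 1) with hδdef
  have hδ0 : 0 < δ := by positivity
  have hδR : δ ≤ R := div_le_self hR.le (by exact_mod_cast Nat.le_add_left 1 n)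
  -- the small lintegral
  have hA : (∫⁻ t in Ioc (0:ℝ) δ, g t) < ENNReal.ofReal (ε / 2) := by
    have := hμs (Ioc (0:ℝ) δ) measurableSet_Ioc
    rw [hμ₀def, Measure.restrict_restrict measurableSet_Ioc,
      inter_eq_left.mpr (Ioc_subset_Ioc_right hδR)] at this
    rwa [← this]
  have hAfin : (∫⁻ t in Ioc (0:ℝ) δ, g t) ≠ ⊤ := hA.ne_top
  set A : ℝ := (∫⁻ t in Ioc (0:ℝ) δ, g t).toReal with hAdef
  have hAlt : A < ε / 2 := ENNReal.toReal_lt_of_lt_ofReal hA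
  set B : ℝ := ∫ t in Ioc δ R, F t * t ^ ((d:ℝ) - 1) with hBdef
  have hB1 : (0:ℝ) < |B| + 1 := by positivity
  filter_upwards [Ioo_mem_nhdsGT_of_mem (⟨le_refl (0:ℝ), by positivity⟩ : (0:ℝ) ∈ Ico 0 (δ/2)),
    hωlim.eventually_lt_const (show (0:ℝ) < (ε/2)/(|B|+1) by positivity)] with h hmem hωh
  have h0 : 0 < h := hmem.1
  have hhδ : h < δ / 2 := hmem.2
  have h2δ : 2 * h < δ := by linarith
  have h2pos : 0 < 2 * h := by linarith
  have hhR : h ≤ R := by linarith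
  have hmemh : h ∈ Ioc (0:ℝ) R := ⟨h0, hhR⟩
  have h2mem : (2*h) ∈ Ioc (0:ℝ) R := ⟨h2pos, by linarith⟩
  have hRmem : R ∈ Ioc (0:ℝ) R := ⟨hR, le_rfl⟩
  -- integrability of F t * t^(d-1) on Ioc (2h) R
  have hIntG : IntegrableOn (fun t => F t * t ^ ((d:ℝ) - 1)) (Ioc (2*h) R) volume := by
    have hsub : Ioc (2*h) R ⊆ Ioc 0 R := Ioc_subset_Ioc_left h2pos.le
    have hmeas : AEStronglyMeasurable (fun t => F t * t ^ ((d:ℝ) - 1))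
        (volume.restrict (Ioc (2*h) R)) :=
      ((hFmeas.mono_measure (Measure.restrict_mono hsub le_rfl)).mul
        hpow.aemeasurable).aestronglyMeasurable
    have hc : IntegrableOn (fun _ : ℝ => F (2*h) * R ^ ((d:ℝ) - 1)) (Ioc (2*h) R) volume :=
      integrableOn_const measure_Ioc_lt_top.ne
    refine hc.mono' hmeas ?_
    rw [ae_restrict_iff' measurableSet_Ioc]
    refine ae_of_all _ fun t ht => ?_
    have ht0 : 0 < t := lt_trans h2pos ht.1
    have hFt : 0 ≤ F t := hF0 t ⟨ht0, ht.2⟩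
    have hp : 0 ≤ t ^ ((d:ℝ) - 1) := Real.rpow_nonneg ht0.le _
    rw [Real.norm_eq_abs, abs_of_nonneg (mul_nonneg hFt hp)]
    exact mul_le_mul (hFanti h2mem ⟨ht0, ht.2⟩ ht.1.le)
      (Real.rpow_le_rpow ht0.le ht.2 hd1) hp (hF0 _ h2mem)
  -- integrability of F t * ω t * t^(d-1) on Ioc (2h) δ
  have hIntGω : IntegrableOn (fun t => F t * ω t * t ^ ((d:ℝ) - 1)) (Ioc (2*h) δ) volume := by
    have hsub : Ioc (2*h) δ ⊆ Ioc 0 R := fun t ht => ⟨lt_trans h2pos ht.1, le_trans ht.2 hδR⟩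
    have hmeas : AEStronglyMeasurable (fun t => F t * ω t * t ^ ((d:ℝ) - 1))
        (volume.restrict (Ioc (2*h) δ)) :=
      (((hFmeas.mono_measure (Measure.restrict_mono hsub le_rfl)).mul
        (hωmeas.mono_measure (Measure.restrict_mono hsub le_rfl))).mul
        hpow.aemeasurable).aestronglyMeasurable
    have hc : IntegrableOn (fun _ : ℝ => F (2*h) * ω R * R ^ ((d:ℝ) - 1)) (Ioc (2*h) δ) volume :=
      integrableOn_const measure_Ioc_lt_top.ne
    refine hc.mono' hmeas ?_
    rw [ae_restrict_iff' measurableSet_Ioc]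
    refine ae_of_all _ fun t ht => ?_
    have ht0 : 0 < t := lt_trans h2pos ht.1
    have htR : t ≤ R := le_trans ht.2 hδR
    have hFt : 0 ≤ F t := hF0 t ⟨ht0, htR⟩
    have hωt : 0 ≤ ω t := hω0 t ⟨ht0, htR⟩
    have hp : 0 ≤ t ^ ((d:ℝ) - 1) := Real.rpow_nonneg ht0.le _
    rw [Real.norm_eq_abs, abs_of_nonneg (mul_nonneg (mul_nonneg hFt hωt) hp)]
    have hF2h : F t ≤ F (2*h) := hFanti h2mem ⟨ht0, htR⟩ ht.1.le
    have hωR : ω t ≤ ω R := hωmono ⟨ht0, htR⟩ hRmem htR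
    have hpR : t ^ ((d:ℝ) - 1) ≤ R ^ ((d:ℝ) - 1) := Real.rpow_le_rpow ht0.le htR hd1
    exact mul_le_mul (mul_le_mul hF2h hωR hωt (hF0 _ h2mem)) hpR hp
      (mul_nonneg (hF0 _ h2mem) (hω0 _ hRmem))
  -- split the integral
  have hsplit : (∫ t in Ioc (2*h) R, F t * t ^ ((d:ℝ) - 1)) =
      (∫ t in Ioc (2*h) δ, F t * t ^ ((d:ℝ) - 1)) + B := by
    rw [hBdef, ← setIntegral_union (Ioc_disjoint_Ioc_of_le le_rfl) measurableSet_Ioc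
      (hIntG.mono_set (Ioc_subset_Ioc_right hδR)) (hIntG.mono_set (Ioc_subset_Ioc_left h2δ.le)),
      Ioc_union_Ioc_eq_Ioc h2δ.le hδR]
  -- nonnegativity of the whole expression
  have hint_nonneg : 0 ≤ ∫ t in Ioc (2*h) R, F t * t ^ ((d:ℝ) - 1) :=
    setIntegral_nonneg measurableSet_Ioc fun t ht =>
      mul_nonneg (hF0 t ⟨lt_trans h2pos ht.1, ht.2⟩)
        (Real.rpow_nonneg (lt_trans h2pos ht.1).le _)
  have hfnn : 0 ≤ ω h * ∫ t in Ioc (2*h) R, F t * t ^ ((d:ℝ) - 1) :=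
    mul_nonneg (hω0 h hmemh) hint_nonneg
  -- term 1 estimate
  have hterm1 : ω h * ∫ t in Ioc (2*h) δ, F t * t ^ ((d:ℝ) - 1) ≤ A := by
    have step1 : ω h * ∫ t in Ioc (2*h) δ, F t * t ^ ((d:ℝ) - 1)
        = ∫ t in Ioc (2*h) δ, ω h * (F t * t ^ ((d:ℝ) - 1)) := (integral_const_mul _ _).symm
    have step2 : (∫ t in Ioc (2*h) δ, ω h * (F t * t ^ ((d:ℝ) - 1)))
        ≤ ∫ t in Ioc (2*h) δ, F t * ω t * t ^ ((d:ℝ) - 1) := by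
      refine setIntegral_mono_on
        ((hIntG.mono_set (Ioc_subset_Ioc_right hδR)).const_mul _) hIntGω
        measurableSet_Ioc fun t ht => ?_
      have ht0 : 0 < t := lt_trans h2pos ht.1
      have htR : t ≤ R := le_trans ht.2 hδR
      have hωle : ω h ≤ ω t := hωmono hmemh ⟨ht0, htR⟩ (by linarith [ht.1])
      have hFt : 0 ≤ F t := hF0 t ⟨ht0, htR⟩
      have hp : 0 ≤ t ^ ((d:ℝ) - 1) := Real.rpow_nonneg ht0.le _
      nlinarith [mul_nonneg (mul_nonneg (sub_nonneg.mpr hωle) hFt) hp]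
    have hnn : 0 ≤ᵐ[volume.restrict (Ioc (2*h) δ)]
        fun t => F t * ω t * t ^ ((d:ℝ) - 1) := by
      filter_upwards [ae_restrict_mem measurableSet_Ioc] with t ht
      have ht0 : 0 < t := lt_trans h2pos ht.1
      have htR : t ≤ R := le_trans ht.2 hδR
      exact mul_nonneg (mul_nonneg (hF0 t ⟨ht0, htR⟩) (hω0 t ⟨ht0, htR⟩))
        (Real.rpow_nonneg ht0.le _)
    have heq := ofReal_integral_eq_lintegral_ofReal hIntGω hnn
    have step3 : (∫ t in Ioc (2*h) δ, F t * ω t * t ^ ((d:ℝ) - 1)) ≤ A := by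
      have hin : 0 ≤ ∫ t in Ioc (2*h) δ, F t * ω t * t ^ ((d:ℝ) - 1) :=
        integral_nonneg_of_ae hnn
      have hle : (∫⁻ t in Ioc (2*h) δ, g t) ≤ ∫⁻ t in Ioc (0:ℝ) δ, g t :=
        lintegral_mono_set (Ioc_subset_Ioc_left h2pos.le)
      calc (∫ t in Ioc (2*h) δ, F t * ω t * t ^ ((d:ℝ) - 1))
          = (ENNReal.ofReal (∫ t in Ioc (2*h) δ, F t * ω t * t ^ ((d:ℝ) - 1))).toReal := by
            rw [ENNReal.toReal_ofReal hin]
        _ = (∫⁻ t in Ioc (2*h) δ, g t).toReal := by rw [heq]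
        _ ≤ A := ENNReal.toReal_mono hAfin hle
    calc ω h * ∫ t in Ioc (2*h) δ, F t * t ^ ((d:ℝ) - 1)
        = ∫ t in Ioc (2*h) δ, ω h * (F t * t ^ ((d:ℝ) - 1)) := step1
      _ ≤ ∫ t in Ioc (2*h) δ, F t * ω t * t ^ ((d:ℝ) - 1) := step2
      _ ≤ A := step3
  -- term 2 estimate
  have hterm2 : ω h * B < ε / 2 := by
    calc ω h * B ≤ ω h * (|B| + 1) :=
          mul_le_mul_of_nonneg_left (by cases abs_cases B <;> linarith) (hω0 h hmemh)
      _ < ε / 2 := (lt_div_iff₀ hB1).mp hωh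
  rw [Real.norm_eq_abs, abs_of_nonneg hfnn]
  calc ω h * ∫ t in Ioc (2*h) R, F t * t ^ ((d:ℝ) - 1)
      = (ω h * ∫ t in Ioc (2*h) δ, F t * t ^ ((d:ℝ) - 1)) + ω h * B := by
        rw [hsplit, mul_add]
    _ < ε := by linarith
end

section
/- Let D ⊂ ℝ^d be a bounded open set and k ∈ ℕ. Let g : ℝ^d → ℝ be integrable on ℝ^d and k times continuously differentiable on ℝ^d \ {0}, and let f : ℝ^d → ℝ be integrable, vanish outside D, and be k times continuously differentiable on D. Then the convolution g ∗ f, i.e. the function x ↦ ∫_{ℝ^d} g(x−y) f(y) dy, is k times continuously differentiable on D. -/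
open MeasureTheory Set Filter Topology Metric

/-- If `g ∈ L¹(ℝ^d)` is `C^k` away from the origin and `f ∈ L¹` vanishes
outside the bounded open set `D` and is `C^k` on `D`, then the convolution `g ∗ f` is
`C^k` on `D`. -/
theorem stmt_4 {d : ℕ} (D : Set (EuclideanSpace ℝ (Fin d)))
    (hD : IsOpen D) (hDbd : Bornology.IsBounded D) (k : ℕ)
    (g f : EuclideanSpace ℝ (Fin d) → ℝ)
    (hg : Integrable g) (hgC : ContDiffOn ℝ k g ({(0 : EuclideanSpace ℝ (Fin d))}ᶜ))
    (hfi : Integrable f) (hfz : ∀ x, x ∉ D → f x = 0) (hfC : ContDiffOn ℝ k f D) :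
    ContDiffOn ℝ k (fun x => ∫ y, g (x - y) * f y) D := by
  obtain ⟨M, hM⟩ := hDbd.subset_closedBall 0
  set M' : ℝ := max M 1 with hM'def
  have hM'1 : (1 : ℝ) ≤ M' := le_max_right _ _
  have hM' : D ⊆ closedBall 0 M' := hM.trans (closedBall_subset_closedBall (le_max_left _ _))
  apply contDiffOn_of_locally_contDiffOn
  intro x₀ hx₀
  obtain ⟨r, hr0, hrD⟩ := Metric.isOpen_iff.1 hD x₀ hx₀
  set ε : ℝ := r / 4 with hεdef
  have hε0 : 0 < ε := by positivity
  refine ⟨ball x₀ ε, isOpen_ball, mem_ball_self hε0, ?_⟩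
  have hballD : ball x₀ ε ⊆ D := (ball_subset_ball (by linarith)).trans hrD
  have hcbD : closedBall x₀ (3 * ε) ⊆ D := by
    refine subset_trans ?_ hrD
    intro z hz
    rw [mem_closedBall] at hz
    rw [mem_ball]
    linarith
  -- bump functions
  set χ : ContDiffBump (0 : EuclideanSpace ℝ (Fin d)) := ⟨ε / 2, ε, by positivity, by linarith⟩
  set φb : ContDiffBump x₀ := ⟨2 * ε, 3 * ε, by positivity, by linarith⟩
  set ψ : ContDiffBump (0 : EuclideanSpace ℝ (Fin d)) :=
    ⟨2 * M', 2 * M' + 1, by linarith, by linarith⟩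
  set g₁ : EuclideanSpace ℝ (Fin d) → ℝ := fun z => χ z * g z with hg₁def
  set g₂ : EuclideanSpace ℝ (Fin d) → ℝ := fun z => (1 - χ z) * g z with hg₂def
  set g₃ : EuclideanSpace ℝ (Fin d) → ℝ := fun z => ψ z * g₂ z with hg₃def
  set f₁ : EuclideanSpace ℝ (Fin d) → ℝ := fun y => φb y * f y with hf₁def
  -- f₁ is C^k with compact support
  have hf₁C : ContDiff ℝ k f₁ := by
    rw [contDiff_iff_contDiffAt]
    intro y
    by_cases hy : y ∈ D
    · exact φb.contDiffAt.mul (hfC.contDiffAt (hD.mem_nhds hy))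
    · have hy' : y ∉ closedBall x₀ (3 * ε) := fun h => hy (hcbD h)
      refine contDiffAt_const (c := (0 : ℝ)) |>.congr_of_eventuallyEq ?_
      filter_upwards [IsOpen.mem_nhds (isClosed_closedBall (x := x₀) (ε := 3*ε)).isOpen_compl hy'] with z hz
      have : φb z = 0 := by
        apply φb.zero_of_le_dist
        have := hz; simp only [mem_compl_iff, mem_closedBall, not_le] at this
        exact this.le
      simp [hf₁def, this]
  have hf₁cs : HasCompactSupport f₁ := by
    apply HasCompactSupport.intro (isCompact_closedBall x₀ (3 * ε))
    intro z hz
    have : φb z = 0 := by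
      apply φb.zero_of_le_dist
      simp only [mem_closedBall, not_le] at hz
      exact hz.le
    simp [hf₁def, this]
  -- g₂ is C^k everywhere (it vanishes near the origin)
  have hg₂C : ContDiff ℝ k g₂ := by
    rw [contDiff_iff_contDiffAt]
    intro z
    by_cases hz : z = 0
    · subst hz
      refine contDiffAt_const (c := (0 : ℝ)) |>.congr_of_eventuallyEq ?_
      filter_upwards [ball_mem_nhds (0 : EuclideanSpace ℝ (Fin d)) (half_pos hε0)] with w hw
      have : χ w = 1 := χ.one_of_mem_closedBall (ball_subset_closedBall hw)
      simp [hg₂def, this]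
    · exact ((contDiff_const.sub χ.contDiff).contDiffAt).mul
        (hgC.contDiffAt (isOpen_compl_singleton.mem_nhds hz))
  have hg₃C : ContDiff ℝ k g₃ := ψ.contDiff.mul hg₂C
  have hg₃cs : HasCompactSupport g₃ := by
    apply HasCompactSupport.intro (isCompact_closedBall (0 : EuclideanSpace ℝ (Fin d)) (2 * M' + 1))
    intro z hz
    have : ψ z = 0 := by
      apply ψ.zero_of_le_dist
      simp only [mem_closedBall, not_le] at hz
      simpa using hz.le
    simp [hg₃def, this]
  -- integrability of g₁
  have hg₁i : Integrable g₁ := by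
    refine hg.bdd_mul χ.continuous.aestronglyMeasurable (c := 1) (ae_of_all _ fun z => ?_)
    rw [Real.norm_eq_abs, abs_of_nonneg χ.nonneg]
    exact χ.le_one
  -- bounds
  obtain ⟨C₁, hC₁⟩ := hf₁cs.exists_bound_of_continuous hf₁C.continuous
  obtain ⟨C₃, hC₃⟩ := hg₃cs.exists_bound_of_continuous hg₃C.continuous
  -- integrability of the two pieces
  have hI₁ : ∀ x, Integrable (fun y => f₁ y * g₁ (x - y)) := fun x =>
    (hg₁i.comp_sub_left x).bdd_mul hf₁C.continuous.aestronglyMeasurable (c := C₁) (ae_of_all _ hC₁)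
  have hI₂ : ∀ x, Integrable (fun y => f y * g₃ (x - y)) := by
    intro x
    have h1 : Integrable (fun y => g₃ (x - y) * f y) :=
      hfi.bdd_mul ((hg₃C.continuous.comp (continuous_const.sub continuous_id)).aestronglyMeasurable)
        (c := C₃) (ae_of_all _ fun y => hC₃ _)
    exact h1.congr (ae_of_all _ fun y => mul_comm _ _)
  -- the two convolutions are C^k
  set L : ℝ →L[ℝ] ℝ →L[ℝ] ℝ := ContinuousLinearMap.mul ℝ ℝ with hLdef
  have hF₁ : ContDiff ℝ k (convolution f₁ g₁ L volume) :=
    hf₁cs.contDiff_convolution_left L hf₁C hg₁i.locallyIntegrable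
  have hF₂ : ContDiff ℝ k (convolution f g₃ L volume) :=
    hg₃cs.contDiff_convolution_right L hfi.locallyIntegrable hg₃C
  -- conclude by congruence on D ∩ ball x₀ ε
  refine ContDiffOn.congr ((hF₁.add hF₂).contDiffOn (s := D ∩ ball x₀ ε)) ?_
  intro x hx
  obtain ⟨hxD, hxB⟩ := hx
  have key : ∀ y, g (x - y) * f y = f₁ y * g₁ (x - y) + f y * g₃ (x - y) := by
    intro y
    have h1 : f₁ y * g₁ (x - y) = f y * g₁ (x - y) := by
      by_cases hχ : χ (x - y) = 0
      · simp [hg₁def, hχ]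
      · have hmem : x - y ∈ ball (0 : EuclideanSpace ℝ (Fin d)) ε := by
          rw [← χ.support_eq]
          exact Function.mem_support.2 hχ
        have hdist : dist y x₀ ≤ 2 * ε := by
          have h₁ : dist (x - y) 0 < ε := mem_ball.1 hmem
          have h₂ : dist x x₀ < ε := mem_ball.1 hxB
          have h₃ : dist y x = dist (x - y) 0 := by
            rw [dist_eq_norm, dist_eq_norm, sub_zero, ← norm_neg, neg_sub]
          calc dist y x₀ ≤ dist y x + dist x x₀ := dist_triangle _ _ _
            _ ≤ ε + ε := by rw [h₃]; linarith
            _ = 2 * ε := by ring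
        have : φb y = 1 := φb.one_of_mem_closedBall (mem_closedBall.2 hdist)
        simp [hf₁def, this]
    have h2 : f y * g₃ (x - y) = f y * g₂ (x - y) := by
      by_cases hf0 : f y = 0
      · simp [hf0]
      · have hyD : y ∈ D := by
          by_contra h
          exact hf0 (hfz y h)
        have hx' : ‖x‖ ≤ M' := by
          have := hM' hxD
          rwa [mem_closedBall, dist_zero_right] at this
        have hy' : ‖y‖ ≤ M' := by
          have := hM' hyD
          rwa [mem_closedBall, dist_zero_right] at this
        have hdist : dist (x - y) (0 : EuclideanSpace ℝ (Fin d)) ≤ 2 * M' := by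
          rw [dist_zero_right]
          calc ‖x - y‖ ≤ ‖x‖ + ‖y‖ := norm_sub_le _ _
            _ ≤ 2 * M' := by linarith
        have : ψ (x - y) = 1 := ψ.one_of_mem_closedBall (mem_closedBall.2 hdist)
        simp [hg₃def, this]
    rw [h1, h2]
    simp only [hg₁def, hg₂def]
    ring
  show (∫ y, g (x - y) * f y) = convolution f₁ g₁ L volume x + convolution f g₃ L volume x
  rw [convolution_def, convolution_def]
  simp only [hLdef, ContinuousLinearMap.mul_apply']
  rw [← integral_add (hI₁ x) (hI₂ x)]
  exact integral_congr_ae (ae_of_all _ key)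
end

section
/- Let D ⊂ ℝ^d be a bounded open set and k ∈ ℕ. Let g : ℝ^d → ℝ be integrable on ℝ^d and k times continuously differentiable on ℝ^d \ {0}. Then the function x ↦ ∫_D g(x−y) dy is k times continuously differentiable on D. -/
open MeasureTheory Set Filter Topology

/-- If `g ∈ L¹(ℝ^d)` is `C^k` away from the origin and `D` is a bounded
open set, then `x ↦ ∫_D g(x−y) dy` is `C^k` on `D`. -/
theorem stmt_5 {d : ℕ} (D : Set (EuclideanSpace ℝ (Fin d)))
    (hD : IsOpen D) (hDbd : Bornology.IsBounded D) (k : ℕ)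
    (g : EuclideanSpace ℝ (Fin d) → ℝ)
    (hg : Integrable g) (hgC : ContDiffOn ℝ k g ({(0 : EuclideanSpace ℝ (Fin d))}ᶜ)) :
    ContDiffOn ℝ k (fun x => ∫ y in D, g (x - y)) D := by
  have hDm : MeasurableSet D := hD.measurableSet
  intro x₀ hx₀
  obtain ⟨ε, hε, hball⟩ := Metric.isOpen_iff.1 hD x₀ hx₀
  obtain ⟨M, hM⟩ := hDbd.subset_closedBall 0
  set R : ℝ := |M| + ‖x₀‖ + ε with hRdef
  have hRpos : 0 < R := by positivity
  set χ : ContDiffBump (0 : EuclideanSpace ℝ (Fin d)) :=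
    ⟨ε / 4, ε / 2, by positivity, by linarith⟩ with hχdef
  set ψ : ContDiffBump (0 : EuclideanSpace ℝ (Fin d)) :=
    ⟨R, R + 1, hRpos, by linarith⟩ with hψdef
  set g₁ : EuclideanSpace ℝ (Fin d) → ℝ := fun y => χ y * g y with hg₁def
  set g₃ : EuclideanSpace ℝ (Fin d) → ℝ := fun y => ψ y * ((1 - χ y) * g y) with hg₃def
  -- integrability of the pieces
  have hg₁int : Integrable g₁ :=
    hg.bdd_mul χ.continuous.aestronglyMeasurable
      (c := 1) (Eventually.of_forall fun x => by
        rw [Real.norm_eq_abs, abs_of_nonneg χ.nonneg]; exact χ.le_one)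
  have hg₃int : Integrable g₃ := by
    have : g₃ = fun y => (ψ y * (1 - χ y)) * g y := by
      funext y; simp [hg₃def]; ring
    rw [this]
    refine hg.bdd_mul ((ψ.continuous.mul (continuous_const.sub χ.continuous)).aestronglyMeasurable)
      (c := 1) (Eventually.of_forall fun x => ?_)
    have h1 : 0 ≤ ψ x * (1 - χ x) := mul_nonneg ψ.nonneg (by linarith [χ.le_one (x := x)])
    rw [Real.norm_eq_abs, abs_of_nonneg h1]
    calc ψ x * (1 - χ x) ≤ 1 * 1 := by
          apply mul_le_mul ψ.le_one (by linarith [χ.nonneg (x := x)]) (by linarith [χ.le_one (x := x)]) zero_le_one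
      _ = 1 := by ring
  -- g₃ is C^k on all of ℝ^d
  have hg₃C : ContDiff ℝ (k : ℕ∞) g₃ := by
    rw [contDiff_iff_contDiffAt]
    intro x
    rcases eq_or_ne x 0 with rfl | hx
    · apply contDiffAt_const (c := (0 : ℝ)) |>.congr_of_eventuallyEq
      filter_upwards [Metric.closedBall_mem_nhds (0 : EuclideanSpace ℝ (Fin d))
        (show (0:ℝ) < ε / 4 by positivity)] with y hy
      have : χ y = 1 := χ.one_of_mem_closedBall hy
      simp [hg₃def, this]
    · exact (ψ.contDiff.contDiffAt).mul
        (((contDiff_const.sub χ.contDiff).contDiffAt).mul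
          (hgC.contDiffAt (isOpen_compl_singleton.mem_nhds hx)))
  -- g₃ has compact support
  have hg₃supp : HasCompactSupport g₃ := by
    apply HasCompactSupport.intro (isCompact_closedBall (0 : EuclideanSpace ℝ (Fin d)) (R + 1))
    intro x hx
    have hd : R + 1 ≤ dist x 0 := le_of_not_ge (fun h => hx (Metric.mem_closedBall.2 h))
    have : ψ x = 0 := ψ.zero_of_le_dist hd
    simp [hg₃def, this]
  -- the indicator of D is integrable
  have hind : Integrable (D.indicator (fun _ => (1 : ℝ))) := by
    rw [integrable_indicator_iff hDm]
    exact integrableOn_const hDbd.measure_lt_top.ne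
  -- the convolution is C^k
  have hconv : ContDiff ℝ (k : ℕ∞)
      (convolution (D.indicator (fun _ => (1 : ℝ))) g₃ (ContinuousLinearMap.mul ℝ ℝ) volume) :=
    hg₃supp.contDiff_convolution_right _ hind.locallyIntegrable hg₃C
  -- the target function agrees with a nice function near x₀
  apply ContDiffAt.contDiffWithinAt
  apply ContDiffAt.congr_of_eventuallyEq
    (f := fun x => (∫ z, g₁ z) + (convolution (D.indicator (fun _ => (1 : ℝ))) g₃ (ContinuousLinearMap.mul ℝ ℝ) volume) x)
  · exact contDiffAt_const.add hconv.contDiffAt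
  · filter_upwards [Metric.ball_mem_nhds x₀ (half_pos hε)] with x hx
    have hx' : dist x x₀ < ε / 2 := Metric.mem_ball.1 hx
    -- the convolution at x is the set integral of g₃
    have ha : (convolution (D.indicator (fun _ => (1 : ℝ))) g₃ (ContinuousLinearMap.mul ℝ ℝ) volume) x
        = ∫ y in D, g₃ (x - y) := by
      rw [convolution_def, ← integral_indicator hDm]
      congr 1
      funext t
      by_cases ht : t ∈ D <;> simp [indicator, ht]
    -- the g₁ part is constant near x₀
    have hb : (∫ y in D, g₁ (x - y)) = ∫ z, g₁ z := by
      rw [setIntegral_eq_integral_of_forall_compl_eq_zero (f := fun y => g₁ (x - y)),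
        integral_sub_left_eq_self g₁ volume x]
      intro y hy
      by_contra hne
      have hχne : χ (x - y) ≠ 0 := fun h => hne (by simp [hg₁def, h])
      have hsupp : x - y ∈ Function.support χ := hχne
      rw [χ.support_eq] at hsupp
      have h1 : dist (x - y) 0 < ε / 2 := Metric.mem_ball.1 hsupp
      rw [dist_zero_right] at h1
      apply hy
      apply hball
      rw [Metric.mem_ball]
      calc dist y x₀ ≤ dist y x + dist x x₀ := dist_triangle _ _ _
        _ < ε / 2 + ε / 2 := by
            apply add_lt_add_of_lt_of_le _ (le_of_lt hx')
            rw [dist_comm, dist_eq_norm]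
            simpa using h1
        _ = ε := by ring
    -- on D, the integrands match: g (x - y) = g₁ (x - y) + g₃ (x - y)
    have hc : (∫ y in D, g (x - y)) = (∫ y in D, g₁ (x - y)) + ∫ y in D, g₃ (x - y) := by
      rw [← integral_add ((hg₁int.comp_sub_left x).integrableOn)
        ((hg₃int.comp_sub_left x).integrableOn)]
      apply setIntegral_congr_fun hDm
      intro y hy
      show g (x - y) = g₁ (x - y) + g₃ (x - y)
      have hyM : ‖y‖ ≤ |M| := by
        have h2 := hM hy
        rw [Metric.mem_closedBall, dist_zero_right] at h2
        exact h2.trans (le_abs_self M)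
      have hψ1 : ψ (x - y) = 1 := by
        apply ψ.one_of_mem_closedBall
        rw [Metric.mem_closedBall, dist_zero_right]
        calc ‖x - y‖ = ‖(x - x₀) + (x₀ - y)‖ := by abel_nf
          _ ≤ ‖x - x₀‖ + ‖x₀ - y‖ := norm_add_le _ _
          _ ≤ ‖x - x₀‖ + (‖x₀‖ + ‖y‖) := by linarith [norm_sub_le x₀ y]
          _ ≤ ε / 2 + (‖x₀‖ + |M|) := by
              have : ‖x - x₀‖ < ε / 2 := by rw [← dist_eq_norm]; exact hx'
              linarith
          _ ≤ R := by rw [hRdef]; linarith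
      simp only [hg₁def, hg₃def, hψ1]
      ring
    rw [hc, hb, ha]
end

section
/- Let β ∈ (0,1) and define f : ℝ → ℝ by f(y) = y·(ln(1 + 1/y))^{−β} for y > 0 and f(y) = 0 for y ≤ 0. Then f is Lipschitz continuous on (−∞, 1] (in particular on [−1,1]). -/
open MeasureTheory Set Filter Topology

/-- For `β ∈ (0,1)`, the function `f(y) = y (ln(1+1/y))^{−β}` for `y > 0`,
`f(y) = 0` for `y ≤ 0`, is Lipschitz continuous on `(−∞,1]`. -/
theorem stmt_9 (β : ℝ) (hβ : β ∈ Ioo (0:ℝ) 1) :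
    ∃ K : NNReal, LipschitzOnWith K
      (fun y : ℝ => if 0 < y then y * (Real.log (1 + 1 / y)) ^ (-β) else 0)
      (Iic (1:ℝ)) := by
  obtain ⟨hβ0, hβ1⟩ := hβ
  set f : ℝ → ℝ := fun y => if 0 < y then y * (Real.log (1 + 1 / y)) ^ (-β) else 0 with hfdef
  have hlog2 : (0:ℝ) < Real.log 2 := Real.log_pos one_lt_two
  set C : ℝ := (Real.log 2) ^ (-β) + β * (Real.log 2) ^ (-β - 1) with hCdef
  have hCpos : 0 < C := by positivity
  -- the basic log estimate on (0,1]
  have hL : ∀ y : ℝ, y ∈ Ioc (0:ℝ) 1 → Real.log 2 ≤ Real.log (1 + 1/y) := by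
    rintro y ⟨hy0, hy1⟩
    have h1 : (1:ℝ) ≤ 1 / y := one_le_one_div hy0 hy1
    have h2 : (2:ℝ) ≤ 1 + 1/y := by linarith
    exact Real.log_le_log two_pos h2
  have hLpos : ∀ y : ℝ, y ∈ Ioc (0:ℝ) 1 → 0 < Real.log (1 + 1/y) :=
    fun y hy => lt_of_lt_of_le hlog2 (hL y hy)
  -- the derivative
  set f' := fun y : ℝ =>
    (Real.log (1 + 1/y)) ^ (-β) + β * (Real.log (1 + 1/y)) ^ (-β - 1) / (y + 1) with hf'def
  have hderiv : ∀ y ∈ Ioc (0:ℝ) 1, HasDerivWithinAt f (f' y) (Ioc (0:ℝ) 1) y := by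
    rintro y hy
    obtain ⟨hy0, hy1⟩ := hy
    have hyne : y ≠ 0 := hy0.ne'
    have hsum : (0:ℝ) < 1 + 1/y := by positivity
    have hLy := hLpos y ⟨hy0, hy1⟩
    have h1 : HasDerivAt (fun z : ℝ => 1 + 1/z) (-(y^2)⁻¹) y := by
      simpa [one_div] using (hasDerivAt_inv hyne).const_add (1:ℝ)
    have h3 : HasDerivAt (fun z : ℝ => Real.log (1 + 1/z))
        ((1 + 1/y)⁻¹ * -(y^2)⁻¹) y := by
      have h := (Real.hasDerivAt_log hsum.ne').comp y h1; exact h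
    have h4 : HasDerivAt (fun z : ℝ => (Real.log (1 + 1/z)) ^ (-β))
        ((-β * (Real.log (1 + 1/y)) ^ (-β - 1)) * ((1 + 1/y)⁻¹ * -(y^2)⁻¹)) y := by
      have := (Real.hasDerivAt_rpow_const (p := -β) (Or.inl hLy.ne')).comp y h3
      simpa [Function.comp_def, mul_comm, mul_assoc, mul_left_comm] using this
    have h5 : HasDerivAt (fun z : ℝ => z * (Real.log (1 + 1/z)) ^ (-β))
        (1 * (Real.log (1 + 1/y)) ^ (-β) +
          y * ((-β * (Real.log (1 + 1/y)) ^ (-β - 1)) * ((1 + 1/y)⁻¹ * -(y^2)⁻¹))) y :=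
      (hasDerivAt_id y).mul h4
    have heq : 1 * (Real.log (1 + 1/y)) ^ (-β) +
          y * ((-β * (Real.log (1 + 1/y)) ^ (-β - 1)) * ((1 + 1/y)⁻¹ * -(y^2)⁻¹)) = f' y := by
      rw [hf'def]
      have hy1ne : y + 1 ≠ 0 := by positivity
      field_simp
    rw [← heq]
    refine (h5.hasDerivWithinAt).congr (fun z hz => ?_) ?_
    · simp only [hfdef]; rw [if_pos hz.1]
    · simp only [hfdef]; rw [if_pos hy0]
  -- the derivative bound
  have hbound : ∀ y ∈ Ioc (0:ℝ) 1, ‖f' y‖₊ ≤ C.toNNReal := by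
    rintro y hy
    obtain ⟨hy0, hy1⟩ := hy
    have hLy := hLpos y ⟨hy0, hy1⟩
    have hb1 : (Real.log (1 + 1/y)) ^ (-β) ≤ (Real.log 2) ^ (-β) :=
      Real.rpow_le_rpow_of_nonpos hlog2 (hL y ⟨hy0, hy1⟩) (neg_nonpos.mpr hβ0.le)
    have hb2 : (Real.log (1 + 1/y)) ^ (-β - 1) ≤ (Real.log 2) ^ (-β - 1) :=
      Real.rpow_le_rpow_of_nonpos hlog2 (hL y ⟨hy0, hy1⟩) (by linarith)
    have hfy0 : 0 ≤ f' y := by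
      rw [hf'def]
      have : (0:ℝ) < y + 1 := by positivity
      positivity
    have hfyC : f' y ≤ C := by
      rw [hf'def, hCdef]
      have hy1' : (1:ℝ) ≤ y + 1 := by linarith
      have h2 : β * (Real.log (1 + 1/y)) ^ (-β - 1) / (y + 1)
          ≤ β * (Real.log 2) ^ (-β - 1) := by
        rw [div_le_iff₀ (by linarith : (0:ℝ) < y + 1)]
        calc β * (Real.log (1 + 1/y)) ^ (-β - 1) ≤ β * (Real.log 2) ^ (-β - 1) :=
              mul_le_mul_of_nonneg_left hb2 hβ0.le
          _ ≤ β * (Real.log 2) ^ (-β - 1) * (y + 1) := by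
              nlinarith [mul_nonneg (mul_nonneg hβ0.le
                (Real.rpow_nonneg hlog2.le (-β - 1))) hy0.le]
      linarith
    rw [← NNReal.coe_le_coe, coe_nnnorm, Real.norm_eq_abs, Real.coe_toNNReal _ hCpos.le,
      abs_of_nonneg hfy0]
    exact hfyC
  have lip : LipschitzOnWith C.toNNReal f (Ioc (0:ℝ) 1) :=
    (convex_Ioc (0:ℝ) 1).lipschitzOnWith_of_nnnorm_hasDerivWithin_le hderiv hbound
  -- the mixed-sign estimate
  have hmix : ∀ y ∈ Ioc (0:ℝ) 1, dist (f y) 0 ≤ C * y := by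
    rintro y ⟨hy0, hy1⟩
    have hLy := hLpos y ⟨hy0, hy1⟩
    have hb1 : (Real.log (1 + 1/y)) ^ (-β) ≤ (Real.log 2) ^ (-β) :=
      Real.rpow_le_rpow_of_nonpos hlog2 (hL y ⟨hy0, hy1⟩) (neg_nonpos.mpr hβ0.le)
    have hfy : f y = y * (Real.log (1 + 1/y)) ^ (-β) := by
      simp only [hfdef]; rw [if_pos hy0]
    have hfy0 : 0 ≤ f y := by
      rw [hfy]; positivity
    rw [Real.dist_eq, sub_zero, abs_of_nonneg hfy0, hfy]
    calc y * (Real.log (1 + 1/y)) ^ (-β) ≤ y * (Real.log 2) ^ (-β) :=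
          mul_le_mul_of_nonneg_left hb1 hy0.le
      _ ≤ C * y := by
          rw [hCdef]
          nlinarith [mul_nonneg (mul_nonneg hβ0.le
            (Real.rpow_nonneg hlog2.le (-β - 1))) hy0.le]
  refine ⟨C.toNNReal, LipschitzOnWith.of_dist_le_mul ?_⟩
  intro x hx y hy
  simp only [Set.mem_Iic] at hx hy
  rw [Real.coe_toNNReal _ hCpos.le]
  rcases le_or_gt x 0 with hx0 | hx0 <;> rcases le_or_gt y 0 with hy0 | hy0
  · have : f x = 0 := by simp only [hfdef]; rw [if_neg (not_lt.mpr hx0)]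
    have h2 : f y = 0 := by simp only [hfdef]; rw [if_neg (not_lt.mpr hy0)]
    rw [this, h2, dist_self]
    positivity
  · have hfx : f x = 0 := by simp only [hfdef]; rw [if_neg (not_lt.mpr hx0)]
    rw [hfx, dist_comm]
    calc dist (f y) 0 ≤ C * y := hmix y ⟨hy0, hy⟩
      _ ≤ C * dist x y := by
          have : y ≤ dist x y := by
            rw [Real.dist_eq]
            calc y ≤ y - x := by linarith
              _ ≤ |y - x| := le_abs_self _
              _ = |x - y| := abs_sub_comm _ _
          exact mul_le_mul_of_nonneg_left this hCpos.le
  · have hfy : f y = 0 := by simp only [hfdef]; rw [if_neg (not_lt.mpr hy0)]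
    rw [hfy]
    calc dist (f x) 0 ≤ C * x := hmix x ⟨hx0, hx⟩
      _ ≤ C * dist x y := by
          have : x ≤ dist x y := by
            rw [Real.dist_eq]
            calc x ≤ x - y := by linarith
              _ ≤ |x - y| := le_abs_self _
          exact mul_le_mul_of_nonneg_left this hCpos.le
  · have := lip.dist_le_mul x ⟨hx0, hx⟩ y ⟨hy0, hy⟩
    rwa [Real.coe_toNNReal _ hCpos.le] at this
end

section
/- Let f : [−1,1] → ℝ be Lipschitz continuous and define g(x) = ∫_{−1}^1 ln(1/|x−y|) f(y) dy. Then for every x ∈ (−1,1), g is differentiable at x and g′(x) = ∫_{−1}^1 (f(y) − f(x))/(y − x) dy + f(x) · ln((1−x)/(1+x)). In particular, for f ≡ 1 this gives that F(x) = ∫_{−1}^1 ln(1/|x−y|) dy satisfies F′(x) = ln((1−x)/(1+x)) on (−1,1). -/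
open MeasureTheory Set Filter Topology

lemma log_one_add_le (t : ℝ) (ht : 0 ≤ t) : Real.log (1 + t) ≤ t := by
  have := Real.log_le_sub_one_of_pos (x := 1 + t) (by linarith)
  linarith

lemma log_one_add_le_rpow (s : ℝ) (hs : 0 ≤ s) :
    Real.log (1 + s) ≤ 4 * s ^ (4⁻¹ : ℝ) := by
  set t := s ^ (4⁻¹ : ℝ) with htdef
  have ht : 0 ≤ t := Real.rpow_nonneg hs _
  have hts : t ^ (4:ℕ) = s := by
    rw [htdef, ← Real.rpow_natCast (s ^ (4⁻¹:ℝ)) 4, ← Real.rpow_mul hs]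
    norm_num
  have h1 : 1 + s ≤ (1 + t) ^ (4:ℕ) := by nlinarith [pow_nonneg ht 2, pow_nonneg ht 3, pow_nonneg ht 4]
  calc Real.log (1 + s) ≤ Real.log ((1 + t) ^ (4:ℕ)) := by
        apply Real.log_le_log (by linarith) h1
      _ = 4 * Real.log (1 + t) := by rw [Real.log_pow]; push_cast; ring
      _ ≤ 4 * t := by have := log_one_add_le t ht; linarith

lemma intervalIntegrable_abs_rpow {r : ℝ} (hr : -1 < r) (c a b : ℝ) :
    IntervalIntegrable (fun y => |y - c| ^ r) volume a b := by
  have main : ∀ d : ℝ, IntervalIntegrable (fun y => |y - c| ^ r) volume c d := by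
    intro d
    rcases le_total c d with h | h
    · have h1 : IntervalIntegrable (fun y => (y - c) ^ r) volume c d := by
        simpa using (intervalIntegral.intervalIntegrable_rpow' hr (a := 0) (b := d - c)).comp_sub_right c
      rw [intervalIntegrable_iff, uIoc_of_le h] at h1 ⊢
      apply h1.congr_fun ?_ measurableSet_Ioc
      intro y hy
      simp only []
      rw [abs_of_nonneg (by linarith [hy.1] : (0:ℝ) ≤ y - c)]
    · have h1 : IntervalIntegrable (fun y => (c - y) ^ r) volume c d := by
        simpa using (intervalIntegral.intervalIntegrable_rpow' hr (a := 0) (b := c - d)).comp_sub_left c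
      rw [intervalIntegrable_iff, uIoc_of_ge h] at h1 ⊢
      apply h1.congr_fun ?_ measurableSet_Ioc
      intro y hy
      simp only []
      rw [abs_of_nonpos (by linarith [hy.2] : y - c ≤ 0), neg_sub]
  exact (main a).symm.trans (main b)

lemma integrableOn_abs_rpow {r : ℝ} (hr : -1 < r) (c a b : ℝ) :
    IntegrableOn (fun y => |y - c| ^ r) (Icc a b) volume := by
  rcases le_total a b with h | h
  · rw [integrableOn_Icc_iff_integrableOn_Ioc]
    have := intervalIntegrable_abs_rpow hr c a b
    rwa [intervalIntegrable_iff, uIoc_of_le h] at this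
  · rcases lt_or_eq_of_le h with h | h
    · simp [Icc_eq_empty_of_lt h]
    · subst h; simp
lemma ae_ne_volume (c : ℝ) : ∀ᵐ (y:ℝ), y ≠ c := by
  rw [ae_iff]
  have : {a : ℝ | ¬a ≠ c} = {c} := by ext y; simp
  rw [this]
  exact Real.volume_singleton

lemma abs_log_le (t : ℝ) (ht : 0 < t) : |Real.log t| ≤ t + 2 * t ^ (-(2⁻¹:ℝ)) := by
  have hrp : 0 < t ^ (-(2⁻¹:ℝ)) := Real.rpow_pos_of_pos ht _
  have h1 : Real.log t ≤ t := (Real.log_le_sub_one_of_pos ht).trans (by linarith)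
  have h2 : -Real.log t ≤ 2 * t ^ (-(2⁻¹:ℝ)) := by
    have hu : Real.log (t ^ (-(2⁻¹:ℝ))) = -(2⁻¹) * Real.log t := Real.log_rpow ht _
    have := (Real.log_le_sub_one_of_pos hrp)
    nlinarith
  rw [abs_le]; constructor <;> nlinarith

lemma integrableOn_log_abs (c : ℝ) :
    IntegrableOn (fun y => Real.log |y - c|) (Icc (-1:ℝ) 1) volume := by
  apply Integrable.mono' (g := fun y => |y - c| + 2 * |y - c| ^ (-(2⁻¹:ℝ)))
  · exact ((continuous_abs.comp (continuous_id.sub continuous_const)).integrableOn_Icc).add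
      ((integrableOn_abs_rpow (by norm_num) c (-1) 1).const_mul 2)
  · exact ((Real.measurable_log.comp ((measurable_id.sub_const c).abs)).aestronglyMeasurable)
  · refine ae_restrict_of_ae ((ae_ne_volume c).mono fun y hy => ?_)
    have : 0 < |y - c| := abs_pos.mpr (sub_ne_zero.mpr hy)
    simpa using abs_log_le _ this

lemma hasDerivAt_halflog (x ε : ℝ) (hε : 0 < ε) (y : ℝ) :
    HasDerivAt (fun y => (1/2) * Real.log ((y-x)^2 + ε^2)) ((y-x)/((y-x)^2+ε^2)) y := by
  have hpos : 0 < (y-x)^2+ε^2 := by positivity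
  have h1 : HasDerivAt (fun y : ℝ => (y-x)^2 + ε^2) (2*(y-x)) y := by
    simpa using (((hasDerivAt_id y).sub_const x).pow 2).add_const (ε^2)
  have h2 := (h1.log (ne_of_gt hpos)).const_mul (1/2:ℝ)
  refine h2.congr_deriv ?_
  field_simp

lemma integral_kernel (x ε : ℝ) (hε : 0 < ε) :
    ∫ y in Icc (-1:ℝ) 1, (y-x)/((y-x)^2+ε^2)
      = (1/2) * Real.log ((1-x)^2+ε^2) - (1/2) * Real.log ((1+x)^2+ε^2) := by
  have hcont : Continuous (fun y : ℝ => (y-x)/((y-x)^2+ε^2)) := by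
    apply Continuous.div ((continuous_id.sub continuous_const))
      (((continuous_id.sub continuous_const).pow 2).add continuous_const)
    intro y; exact (show (0:ℝ) < (y-x)^2+ε^2 by positivity).ne'
  have := intervalIntegral.integral_eq_sub_of_hasDerivAt
    (f := fun y => (1/2) * Real.log ((y-x)^2 + ε^2)) (a := (-1:ℝ)) (b := 1)
    (fun y _ => hasDerivAt_halflog x ε hε y) (hcont.intervalIntegrable _ _)
  rw [MeasureTheory.integral_Icc_eq_integral_Ioc,
    ← intervalIntegral.integral_of_le (by norm_num : (-1:ℝ) ≤ 1), this]
  rw [show ((-1:ℝ)-x)^2 = (1+x)^2 by ring]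

lemma hasDerivAt_arctan_aux (x ε : ℝ) (hε : 0 < ε) (y : ℝ) :
    HasDerivAt (fun y => ε⁻¹ * Real.arctan ((y-x)/ε)) (((y-x)^2+ε^2)⁻¹) y := by
  have h1 : HasDerivAt (fun y : ℝ => (y-x)/ε) (1/ε) y := by
    simpa using ((hasDerivAt_id y).sub_const x).div_const ε
  have h2 := ((Real.hasDerivAt_arctan ((y-x)/ε)).comp y h1).const_mul ε⁻¹
  refine h2.congr_deriv ?_
  have : 0 < (y-x)^2 + ε^2 := by positivity
  field_simp
  ring

lemma integral_kernel_sq_le (x ε : ℝ) (hε : 0 < ε) :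
    ∫ y in Icc (-1:ℝ) 1, ((y-x)^2+ε^2)⁻¹ ≤ Real.pi / ε := by
  have hcont : Continuous (fun y : ℝ => ((y-x)^2+ε^2)⁻¹) := by
    apply Continuous.inv₀ (((continuous_id.sub continuous_const).pow 2).add continuous_const)
    intro y; exact (show (0:ℝ) < (y-x)^2+ε^2 by positivity).ne'
  have heq := intervalIntegral.integral_eq_sub_of_hasDerivAt
    (f := fun y => ε⁻¹ * Real.arctan ((y-x)/ε)) (a := (-1:ℝ)) (b := 1)
    (fun y _ => hasDerivAt_arctan_aux x ε hε y) (hcont.intervalIntegrable _ _)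
  rw [MeasureTheory.integral_Icc_eq_integral_Ioc,
    ← intervalIntegral.integral_of_le (by norm_num : (-1:ℝ) ≤ 1), heq]
  have b1 := Real.arctan_lt_pi_div_two ((1-x)/ε)
  have b2 := Real.neg_pi_div_two_lt_arctan ((-1-x)/ε)
  have : ε⁻¹ * Real.arctan ((1 - x) / ε) - ε⁻¹ * Real.arctan ((-1 - x) / ε)
      ≤ ε⁻¹ * (Real.pi/2) - ε⁻¹ * (-(Real.pi/2)) := by
    have hi : 0 < ε⁻¹ := by positivity
    have := mul_le_mul_of_nonneg_left b1.le hi.le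
    have := mul_le_mul_of_nonneg_left b2.le hi.le
    nlinarith
  calc _ ≤ ε⁻¹ * (Real.pi/2) - ε⁻¹ * (-(Real.pi/2)) := this
    _ = Real.pi / ε := by field_simp; ring

lemma bound_abs_f (f : ℝ → ℝ) (K : NNReal) (hf : LipschitzOnWith K f (Icc (-1) 1))
    (y : ℝ) (hy : y ∈ Icc (-1:ℝ) 1) : |f y| ≤ |f 0| + K := by
  have h0 : (0:ℝ) ∈ Icc (-1:ℝ) 1 := by norm_num
  have := hf.dist_le_mul y hy 0 h0
  rw [Real.dist_eq, Real.dist_eq, sub_zero] at this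
  have hy1 : |y| ≤ 1 := abs_le.mpr ⟨hy.1, hy.2⟩
  have h2 : |f y| - |f 0| ≤ |f y - f 0| := abs_sub_abs_le_abs_sub _ _
  have h3 : (K:ℝ) * |y| ≤ K * 1 := by
    apply mul_le_mul_of_nonneg_left hy1 K.2
  linarith

lemma P1 (f : ℝ → ℝ) (M : ℝ)
    (hM : ∀ y ∈ Icc (-1:ℝ) 1, |f y| ≤ M)
    (hcf : ContinuousOn f (Icc (-1:ℝ) 1))
    (ε : ℝ) (hε : 0 < ε) (x₀ : ℝ) :
    HasDerivAt (fun x => ∫ y in Icc (-1:ℝ) 1, -(1/2) * Real.log ((x-y)^2+ε^2) * f y)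
      (∫ y in Icc (-1:ℝ) 1, (y-x₀)/((y-x₀)^2+ε^2) * f y) x₀ := by
  have hpos : ∀ x y : ℝ, (0:ℝ) < (x-y)^2 + ε^2 := fun x y => by positivity
  have hkc : ∀ x : ℝ, ContinuousOn (fun y => -(1/2) * Real.log ((x-y)^2+ε^2) * f y)
      (Icc (-1:ℝ) 1) := by
    intro x
    apply ContinuousOn.mul _ hcf
    apply Continuous.continuousOn
    exact (continuous_const.mul ((((continuous_const.sub continuous_id).pow 2).add
      continuous_const).log (fun y => (hpos x y).ne')))
  have hkc' : ContinuousOn (fun y => (y-x₀)/((y-x₀)^2+ε^2) * f y) (Icc (-1:ℝ) 1) := by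
    apply ContinuousOn.mul _ hcf
    apply Continuous.continuousOn
    apply Continuous.div ((continuous_id.sub continuous_const))
      (((continuous_id.sub continuous_const).pow 2).add continuous_const)
    intro y
    have := hpos y x₀
    exact this.ne'
  have key := hasDerivAt_integral_of_dominated_loc_of_deriv_le (μ := volume.restrict (Icc (-1:ℝ) 1))
    (F := fun x y => -(1/2) * Real.log ((x-y)^2+ε^2) * f y)
    (F' := fun x y => (y-x)/((y-x)^2+ε^2) * f y)
    (x₀ := x₀) (bound := fun _ => ε⁻¹ * (M + 1))
    (s := Metric.ball x₀ 1) (Metric.ball_mem_nhds x₀ one_pos)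
    ?_ ?_ ?_ ?_ ?_ ?_
  · exact key.2
  · filter_upwards with x
    exact (hkc x).aestronglyMeasurable measurableSet_Icc
  · exact (hkc x₀).integrableOn_Icc
  · exact hkc'.aestronglyMeasurable measurableSet_Icc
  · rw [ae_restrict_iff' measurableSet_Icc]
    filter_upwards with y hy x _
    have hb : |y - x| / ((y-x)^2 + ε^2) ≤ ε⁻¹ := by
      rw [div_le_iff₀ (by positivity)]
      have h2 : ε * |y - x| ≤ (y-x)^2 + ε^2 := by
        nlinarith [sq_nonneg (|y - x| - ε), sq_abs (y - x)]
      calc |y - x| = ε⁻¹ * (ε * |y - x|) := by field_simp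
        _ ≤ ε⁻¹ * ((y-x)^2 + ε^2) := by
            apply mul_le_mul_of_nonneg_left h2 (by positivity)
    have hfy : |f y| ≤ M := hM y hy
    have hM0 : 0 ≤ M := (abs_nonneg _).trans hfy
    calc ‖(y-x)/((y-x)^2+ε^2) * f y‖ = |y-x| / ((y-x)^2+ε^2) * |f y| := by
          rw [norm_mul, Real.norm_eq_abs, Real.norm_eq_abs, abs_div, abs_of_pos (hpos y x)]
      _ ≤ ε⁻¹ * (M + 1) := by
          have h1 : 0 ≤ |y-x| / ((y-x)^2+ε^2) := by positivity
          have : |y-x| / ((y-x)^2+ε^2) * |f y| ≤ ε⁻¹ * M := by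
            apply mul_le_mul hb hfy (abs_nonneg _) (by positivity)
          have hε' : (0:ℝ) ≤ ε⁻¹ := by positivity
          nlinarith
  · exact integrable_const _
  · filter_upwards with y x _
    have h := (hasDerivAt_halflog y ε hε x).mul_const (-(f y))
    have hfun : (fun x => 1/2 * Real.log ((x-y)^2 + ε^2) * -f y)
        = (fun x => -(1/2) * Real.log ((x-y)^2+ε^2) * f y) := by
      ext z; ring
    rw [hfun] at h
    refine h.congr_deriv ?_
    rw [show (y-x)^2 = (x-y)^2 by ring]
    ring

lemma intE (f : ℝ → ℝ) (K : NNReal) (hf : LipschitzOnWith K f (Icc (-1) 1))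
    (hmeas : AEStronglyMeasurable f (volume.restrict (Icc (-1:ℝ) 1)))
    (x : ℝ) (hx : x ∈ Icc (-1:ℝ) 1) :
    IntegrableOn (fun y => (f y - f x)/(y-x)) (Icc (-1:ℝ) 1) volume := by
  apply Integrable.mono' (g := fun _ => (K:ℝ))
  · exact integrable_const _
  · refine AEStronglyMeasurable.congr (f := fun y => (f y - f x) * (y - x)⁻¹) (((hmeas.sub (aestronglyMeasurable_const (b := f x))).mul
      (Measurable.aestronglyMeasurable ((measurable_id.sub_const x).inv)))) ?_
    filter_upwards with y
    rw [div_eq_mul_inv]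
  · rw [ae_restrict_iff' measurableSet_Icc]
    filter_upwards with y hy
    by_cases hyx : y = x
    · subst hyx; simp
    · have h1 : 0 < |y - x| := abs_pos.mpr (sub_ne_zero.mpr hyx)
      have h2 := hf.dist_le_mul y hy x hx
      rw [Real.dist_eq, Real.dist_eq] at h2
      rw [Real.norm_eq_abs, abs_div, div_le_iff₀ h1]
      exact h2

lemma B1 (f : ℝ → ℝ) (K : NNReal) (hf : LipschitzOnWith K f (Icc (-1) 1))
    (hmeas : AEStronglyMeasurable f (volume.restrict (Icc (-1:ℝ) 1)))
    (hcf : ContinuousOn f (Icc (-1:ℝ) 1))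
    (x : ℝ) (hx : x ∈ Icc (-1:ℝ) 1) (ε : ℝ) (hε : 0 < ε) :
    |(∫ y in Icc (-1:ℝ) 1, (y-x)*(f y - f x)/((y-x)^2+ε^2))
      - ∫ y in Icc (-1:ℝ) 1, (f y - f x)/(y-x)| ≤ Real.pi * K * ε := by
  have hpos : ∀ y : ℝ, (0:ℝ) < (y-x)^2 + ε^2 := fun y => by positivity
  have hBc : ContinuousOn (fun y => (y-x)*(f y - f x)/((y-x)^2+ε^2)) (Icc (-1:ℝ) 1) := by
    apply ContinuousOn.div
    · exact (Continuous.continuousOn (continuous_id.sub continuous_const)).mul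
        (hcf.sub continuousOn_const)
    · exact Continuous.continuousOn (((continuous_id.sub continuous_const).pow 2).add
        continuous_const)
    · exact fun y _ => (hpos y).ne'
  have hBint := hBc.integrableOn_Icc (μ := volume)
  have hEint := intE f K hf hmeas x hx
  have hGc : Continuous (fun y : ℝ => (K:ℝ) * ε^2 * ((y-x)^2+ε^2)⁻¹) :=
    continuous_const.mul ((((continuous_id.sub continuous_const).pow 2).add
      continuous_const).inv₀ (fun y => (hpos y).ne'))
  rw [← integral_sub hBint hEint]
  calc |∫ y in Icc (-1:ℝ) 1, ((y-x)*(f y - f x)/((y-x)^2+ε^2) - (f y - f x)/(y-x))|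
      ≤ ∫ y in Icc (-1:ℝ) 1, ‖(y-x)*(f y - f x)/((y-x)^2+ε^2) - (f y - f x)/(y-x)‖ :=
        by rw [← Real.norm_eq_abs]; exact norm_integral_le_integral_norm _
    _ ≤ ∫ y in Icc (-1:ℝ) 1, (K:ℝ) * ε^2 * ((y-x)^2+ε^2)⁻¹ := by
        apply setIntegral_mono_on ((hBint.sub hEint).norm) (hGc.continuousOn.integrableOn_Icc (μ := volume))
          measurableSet_Icc
        intro y hy
        simp only [Pi.sub_apply]
        by_cases hyx : y = x
        · subst hyx; simp; positivity
        · have ha : (0:ℝ) < |y - x| := abs_pos.mpr (sub_ne_zero.mpr hyx)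
          have hfd : |f y - f x| ≤ (K:ℝ) * |y - x| := by
            have h2 := hf.dist_le_mul y hy x hx
            rwa [Real.dist_eq, Real.dist_eq] at h2
          have hne : y - x ≠ 0 := sub_ne_zero.mpr hyx
          have heq : (y-x)*(f y - f x)/((y-x)^2+ε^2) - (f y - f x)/(y-x)
              = (f y - f x) * (-(ε^2) / ((y-x)*((y-x)^2+ε^2))) := by
            field_simp
            ring
          rw [Real.norm_eq_abs, heq, abs_mul, abs_div, abs_neg, abs_of_pos (by positivity : (0:ℝ) < ε^2),
            abs_mul, abs_of_pos (hpos y)]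
          calc |f y - f x| * (ε^2 / (|y-x| * ((y-x)^2+ε^2)))
              ≤ ((K:ℝ) * |y-x|) * (ε^2 / (|y-x| * ((y-x)^2+ε^2))) := by
                apply mul_le_mul_of_nonneg_right hfd (by positivity)
            _ = (K:ℝ) * ε^2 * ((y-x)^2+ε^2)⁻¹ := by
                field_simp
    _ = (K:ℝ) * ε^2 * ∫ y in Icc (-1:ℝ) 1, ((y-x)^2+ε^2)⁻¹ := MeasureTheory.integral_const_mul _ _
    _ ≤ (K:ℝ) * ε^2 * (Real.pi / ε) := by
        apply mul_le_mul_of_nonneg_left (integral_kernel_sq_le x ε hε) (by positivity)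
    _ = Real.pi * K * ε := by field_simp

lemma B2 (x : ℝ) (hx : x ∈ Ioo (-1:ℝ) 1) (ε : ℝ) (hε : 0 < ε) :
    |(1/2) * Real.log ((1-x)^2+ε^2) - (1/2) * Real.log ((1+x)^2+ε^2)
      - Real.log ((1-x)/(1+x))| ≤ ε^2/(1-x)^2 + ε^2/(1+x)^2 := by
  have h1 : (0:ℝ) < 1 - x := by linarith [hx.2]
  have h2 : (0:ℝ) < 1 + x := by linarith [hx.1]
  have e1 : Real.log ((1-x)/(1+x)) = Real.log (1-x) - Real.log (1+x) :=
    Real.log_div h1.ne' h2.ne'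
  have aux : ∀ c : ℝ, 0 < c → Real.log (c^2+ε^2) = 2 * Real.log c + Real.log (1 + ε^2/c^2) := by
    intro c hc
    have hc2 : (c:ℝ)^2 ≠ 0 := by positivity
    rw [show c^2 + ε^2 = c^2 * (1 + ε^2/c^2) by field_simp,
      Real.log_mul hc2 (by positivity : (1:ℝ) + ε^2/c^2 ≠ 0)]
    rw [show (c:ℝ)^2 = c^2 by rfl]
    rw [Real.log_pow]
    push_cast
    ring
  rw [aux _ h1, aux _ h2, e1]
  have hA0 : 0 ≤ Real.log (1 + ε^2/(1-x)^2) := Real.log_nonneg (by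
    have : (0:ℝ) ≤ ε^2/(1-x)^2 := by positivity
    linarith)
  have hAle : Real.log (1 + ε^2/(1-x)^2) ≤ ε^2/(1-x)^2 := log_one_add_le _ (by positivity)
  have hB0 : 0 ≤ Real.log (1 + ε^2/(1+x)^2) := Real.log_nonneg (by
    have : (0:ℝ) ≤ ε^2/(1+x)^2 := by positivity
    linarith)
  have hBle : Real.log (1 + ε^2/(1+x)^2) ≤ ε^2/(1+x)^2 := log_one_add_le _ (by positivity)
  rw [abs_le]
  constructor <;> nlinarith

lemma Gbound (f : ℝ → ℝ) (K : NNReal) (hf : LipschitzOnWith K f (Icc (-1) 1))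
    (hmeas : AEStronglyMeasurable f (volume.restrict (Icc (-1:ℝ) 1)))
    (hcf : ContinuousOn f (Icc (-1:ℝ) 1)) (M : ℝ) (hM : ∀ y ∈ Icc (-1:ℝ) 1, |f y| ≤ M)
    (x : ℝ) (hx : x ∈ Ioo (-1:ℝ) 1) (ε : ℝ) (hε : 0 < ε) :
    |(∫ y in Icc (-1:ℝ) 1, (y-x)/((y-x)^2+ε^2) * f y)
      - ((∫ y in Icc (-1:ℝ) 1, (f y - f x)/(y-x)) + f x * Real.log ((1-x)/(1+x)))|
      ≤ Real.pi * K * ε + M * (ε^2/(1-x)^2 + ε^2/(1+x)^2) := by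
  have hxI : x ∈ Icc (-1:ℝ) 1 := ⟨hx.1.le, hx.2.le⟩
  have hpos : ∀ y : ℝ, (0:ℝ) < (y-x)^2 + ε^2 := fun y => by positivity
  have hBc : ContinuousOn (fun y => (y-x)*(f y - f x)/((y-x)^2+ε^2)) (Icc (-1:ℝ) 1) := by
    apply ContinuousOn.div
    · exact (Continuous.continuousOn (continuous_id.sub continuous_const)).mul
        (hcf.sub continuousOn_const)
    · exact Continuous.continuousOn (((continuous_id.sub continuous_const).pow 2).add
        continuous_const)
    · exact fun y _ => (hpos y).ne'
  have hBint := hBc.integrableOn_Icc (μ := volume)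
  have hCc : Continuous (fun y : ℝ => (y-x)/((y-x)^2+ε^2)) := by
    apply Continuous.div (continuous_id.sub continuous_const)
      (((continuous_id.sub continuous_const).pow 2).add continuous_const)
    exact fun y => (hpos y).ne'
  have hCint : IntegrableOn (fun y : ℝ => (y-x)/((y-x)^2+ε^2)) (Icc (-1:ℝ) 1) volume := hCc.continuousOn.integrableOn_Icc
  have hsplit : (∫ y in Icc (-1:ℝ) 1, (y-x)/((y-x)^2+ε^2) * f y)
      = (∫ y in Icc (-1:ℝ) 1, (y-x)*(f y - f x)/((y-x)^2+ε^2))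
        + f x * ∫ y in Icc (-1:ℝ) 1, (y-x)/((y-x)^2+ε^2) := by
    have hpt : ∀ y : ℝ, (y-x)/((y-x)^2+ε^2) * f y
        = (y-x)*(f y - f x)/((y-x)^2+ε^2) + f x * ((y-x)/((y-x)^2+ε^2)) := by
      intro y
      have h := (hpos y).ne'
      field_simp
      ring
    calc (∫ y in Icc (-1:ℝ) 1, (y-x)/((y-x)^2+ε^2) * f y)
        = ∫ y in Icc (-1:ℝ) 1, ((y-x)*(f y - f x)/((y-x)^2+ε^2)
            + f x * ((y-x)/((y-x)^2+ε^2))) := by simp_rw [hpt]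
      _ = (∫ y in Icc (-1:ℝ) 1, (y-x)*(f y - f x)/((y-x)^2+ε^2))
            + ∫ y in Icc (-1:ℝ) 1, f x * ((y-x)/((y-x)^2+ε^2)) :=
          integral_add hBint (hCint.const_mul _)
      _ = _ := by rw [MeasureTheory.integral_const_mul]
  rw [hsplit, integral_kernel x ε hε]
  have hb1 := B1 f K hf hmeas hcf x hxI ε hε
  have hb2 := B2 x hx ε hε
  have hfx : |f x| ≤ M := hM x hxI
  have hM0 : (0:ℝ) ≤ M := (abs_nonneg _).trans hfx
  set IB := ∫ y in Icc (-1:ℝ) 1, (y-x)*(f y - f x)/((y-x)^2+ε^2)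
  set IE := ∫ y in Icc (-1:ℝ) 1, (f y - f x)/(y-x)
  set L1 := (1/2) * Real.log ((1-x)^2+ε^2) - (1/2) * Real.log ((1+x)^2+ε^2)
  set Lr := Real.log ((1-x)/(1+x))
  calc |IB + f x * L1 - (IE + f x * Lr)| = |(IB - IE) + f x * (L1 - Lr)| := by ring_nf
    _ ≤ |IB - IE| + |f x * (L1 - Lr)| := abs_add_le _ _
    _ = |IB - IE| + |f x| * |L1 - Lr| := by rw [abs_mul]
    _ ≤ Real.pi * K * ε + M * (ε^2/(1-x)^2 + ε^2/(1+x)^2) := by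
        apply add_le_add hb1
        apply mul_le_mul hfx hb2 (abs_nonneg _) hM0

lemma P7 (f : ℝ → ℝ)
    (hmeas : AEStronglyMeasurable f (volume.restrict (Icc (-1:ℝ) 1)))
    (hcf : ContinuousOn f (Icc (-1:ℝ) 1)) (M : ℝ) (hM : ∀ y ∈ Icc (-1:ℝ) 1, |f y| ≤ M)
    (x : ℝ) (ε : ℝ) (hε : 0 < ε) :
    |(∫ y in Icc (-1:ℝ) 1, Real.log (1/|x - y|) * f y)
      - ∫ y in Icc (-1:ℝ) 1, -(1/2) * Real.log ((x-y)^2+ε^2) * f y|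
      ≤ (2 * M * ∫ y in Icc (-1:ℝ) 1, |y - x| ^ (-(2⁻¹:ℝ))) * ε ^ (2⁻¹:ℝ) := by
  have hM0 : (0:ℝ) ≤ M := (abs_nonneg _).trans (hM 0 (by norm_num))
  have hpos : ∀ y : ℝ, (0:ℝ) < (x-y)^2 + ε^2 := fun y => by positivity
  -- integrability of the log kernel times f
  have hg_int : IntegrableOn (fun y => Real.log (1/|x - y|) * f y) (Icc (-1:ℝ) 1) volume := by
    apply Integrable.mono' (g := fun y => (|y - x| + 2 * |y - x| ^ (-(2⁻¹:ℝ))) * M)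
    · exact (((continuous_abs.comp (continuous_id.sub continuous_const)).integrableOn_Icc).add
        ((integrableOn_abs_rpow (by norm_num) x (-1) 1).const_mul 2)).mul_const M
    · exact ((Real.measurable_log.comp
        (measurable_const.div ((measurable_const.sub measurable_id).abs))).aestronglyMeasurable).mul hmeas
    · filter_upwards [ae_restrict_mem measurableSet_Icc,
        ae_restrict_of_ae (ae_ne_volume x)] with y hy hyx
      have ht : (0:ℝ) < |y - x| := abs_pos.mpr (sub_ne_zero.mpr hyx)
      have h1 : |Real.log (1/|x - y|)| ≤ |y - x| + 2 * |y - x| ^ (-(2⁻¹:ℝ)) := by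
        rw [one_div, Real.log_inv, abs_neg, abs_sub_comm x y]
        exact abs_log_le _ ht
      rw [norm_mul, Real.norm_eq_abs, Real.norm_eq_abs]
      apply mul_le_mul h1 (hM y hy) (abs_nonneg _)
      positivity
  have hF_int : IntegrableOn (fun y => -(1/2) * Real.log ((x-y)^2+ε^2) * f y)
      (Icc (-1:ℝ) 1) volume := by
    apply ContinuousOn.integrableOn_Icc
    apply ContinuousOn.mul _ hcf
    exact Continuous.continuousOn (continuous_const.mul
      ((((continuous_const.sub continuous_id).pow 2).add continuous_const).log
        (fun y => (hpos y).ne')))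
  rw [← integral_sub hg_int hF_int]
  have hrint : IntegrableOn (fun y : ℝ => 2 * M * ε ^ (2⁻¹:ℝ) * |y - x| ^ (-(2⁻¹:ℝ)))
      (Icc (-1:ℝ) 1) volume := (integrableOn_abs_rpow (by norm_num) x (-1) 1).const_mul _
  calc |∫ y in Icc (-1:ℝ) 1, (Real.log (1/|x - y|) * f y
          - -(1/2) * Real.log ((x-y)^2+ε^2) * f y)|
      ≤ ∫ y in Icc (-1:ℝ) 1, ‖Real.log (1/|x - y|) * f y
          - -(1/2) * Real.log ((x-y)^2+ε^2) * f y‖ := by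
        rw [← Real.norm_eq_abs]; exact norm_integral_le_integral_norm _
    _ ≤ ∫ y in Icc (-1:ℝ) 1, 2 * M * ε ^ (2⁻¹:ℝ) * |y - x| ^ (-(2⁻¹:ℝ)) := by
        apply integral_mono_ae ((hg_int.sub hF_int).norm) hrint
        filter_upwards [ae_restrict_mem measurableSet_Icc,
          ae_restrict_of_ae (ae_ne_volume x)] with y hy hyx
        have hxy : x - y ≠ 0 := sub_ne_zero.mpr (Ne.symm hyx)
        have hxy2 : (0:ℝ) < (x - y)^2 := by positivity
        have hsn : (0:ℝ) ≤ ε^2/(x-y)^2 := by positivity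
        have hlog : Real.log (1/|x - y|) + (1/2) * Real.log ((x-y)^2+ε^2)
            = (1/2) * Real.log (1 + ε^2/(x-y)^2) := by
          have habs : Real.log |x - y| = Real.log (x - y) := Real.log_abs _
          rw [one_div, Real.log_inv, habs,
            show (1:ℝ) + ε^2/(x-y)^2 = ((x-y)^2+ε^2)/(x-y)^2 by field_simp,
            Real.log_div (hpos y).ne' hxy2.ne', Real.log_pow]
          push_cast
          ring
        have heq : Real.log (1/|x - y|) * f y - -(1/2) * Real.log ((x-y)^2+ε^2) * f y
            = ((1/2) * Real.log (1 + ε^2/(x-y)^2)) * f y := by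
          rw [← hlog]; ring
        simp only [Pi.sub_apply]
        rw [heq, norm_mul, Real.norm_eq_abs, Real.norm_eq_abs]
        have hln0 : (0:ℝ) ≤ Real.log (1 + ε^2/(x-y)^2) := Real.log_nonneg (by linarith)
        have hln : Real.log (1 + ε^2/(x-y)^2) ≤ 4 * (ε^2/(x-y)^2) ^ (4⁻¹:ℝ) :=
          log_one_add_le_rpow _ hsn
        have hrw : (ε^2/(x-y)^2) ^ (4⁻¹:ℝ) = ε ^ (2⁻¹:ℝ) * |y - x| ^ (-(2⁻¹:ℝ)) := by
          rw [Real.div_rpow (by positivity) (sq_nonneg _)]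
          have e1 : (ε^2) ^ (4⁻¹:ℝ) = ε ^ (2⁻¹:ℝ) := by
            rw [← Real.rpow_natCast ε 2, ← Real.rpow_mul hε.le]
            norm_num
          have e2 : ((x-y)^2) ^ (4⁻¹:ℝ) = |y - x| ^ (2⁻¹:ℝ) := by
            rw [show (x-y)^2 = |y-x|^(2:ℕ) by rw [sq_abs]; ring,
              ← Real.rpow_natCast |y-x| 2, ← Real.rpow_mul (abs_nonneg _)]
            norm_num
          rw [e1, e2, Real.rpow_neg (abs_nonneg _), div_eq_mul_inv]
        have habs : |(1/2) * Real.log (1 + ε^2/(x-y)^2)| = (1/2) * Real.log (1 + ε^2/(x-y)^2) := by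
          rw [abs_of_nonneg]; positivity
        rw [habs]
        have hfy := hM y hy
        have hb1 : (1/2) * Real.log (1 + ε^2/(x-y)^2) ≤ 2 * (ε ^ (2⁻¹:ℝ) * |y - x| ^ (-(2⁻¹:ℝ))) := by
          rw [← hrw]; linarith
        calc (1/2) * Real.log (1 + ε^2/(x-y)^2) * |f y|
            ≤ (2 * (ε ^ (2⁻¹:ℝ) * |y - x| ^ (-(2⁻¹:ℝ)))) * M := by
              apply mul_le_mul hb1 hfy (abs_nonneg _)
              positivity
          _ = 2 * M * ε ^ (2⁻¹:ℝ) * |y - x| ^ (-(2⁻¹:ℝ)) := by ring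
    _ = (2 * M * ∫ y in Icc (-1:ℝ) 1, |y - x| ^ (-(2⁻¹:ℝ))) * ε ^ (2⁻¹:ℝ) := by
        rw [MeasureTheory.integral_const_mul]
        ring

lemma main_lemma (f : ℝ → ℝ) (K : NNReal) (hf : LipschitzOnWith K f (Icc (-1) 1)) :
    ∀ x ∈ Ioo (-1:ℝ) 1,
      HasDerivAt (fun x' => ∫ y in Icc (-1:ℝ) 1, Real.log (1 / |x' - y|) * f y)
        ((∫ y in Icc (-1:ℝ) 1, (f y - f x) / (y - x))
          + f x * Real.log ((1 - x) / (1 + x))) x := by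
  intro x hx
  have hcf : ContinuousOn f (Icc (-1:ℝ) 1) := hf.continuousOn
  have hmeas : AEStronglyMeasurable f (volume.restrict (Icc (-1:ℝ) 1)) :=
    hcf.aestronglyMeasurable measurableSet_Icc
  set M : ℝ := |f 0| + K with hMdef
  have hM : ∀ y ∈ Icc (-1:ℝ) 1, |f y| ≤ M := fun y hy => bound_abs_f f K hf y hy
  have hM0 : (0:ℝ) ≤ M := (abs_nonneg _).trans (hM 0 (by norm_num))
  have hxs : x ∈ Ioo ((x-1)/2) ((x+1)/2) := ⟨by linarith [hx.1], by linarith [hx.2]⟩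
  have hsub : ∀ x' ∈ Ioo ((x-1)/2) ((x+1)/2), x' ∈ Ioo (-1:ℝ) 1 := by
    intro x' hx'
    obtain ⟨a1, a2⟩ := hx'
    exact ⟨by linarith [hx.1], by linarith [hx.2]⟩
  apply hasDerivAt_of_tendstoUniformlyOn (l := 𝓝[>] (0:ℝ))
    (f := fun ε x' => ∫ y in Icc (-1:ℝ) 1, -(1/2) * Real.log ((x'-y)^2+ε^2) * f y)
    (f' := fun ε x' => ∫ y in Icc (-1:ℝ) 1, (y-x')/((y-x')^2+ε^2) * f y)
    (g := fun x' => ∫ y in Icc (-1:ℝ) 1, Real.log (1 / |x' - y|) * f y)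
    (g' := fun x' => (∫ y in Icc (-1:ℝ) 1, (f y - f x') / (y - x'))
          + f x' * Real.log ((1 - x') / (1 + x'))) isOpen_Ioo ?_ ?_ ?_ hxs
  · -- uniform convergence of derivatives
    rw [Metric.tendstoUniformlyOn_iff]
    intro δ hδ
    have hd1 : (0:ℝ) < (1-x)/2 := by linarith [hx.2]
    have hd2 : (0:ℝ) < (1+x)/2 := by linarith [hx.1]
    set Φ : ℝ → ℝ := fun ε => Real.pi * K * ε
        + M * (ε^2/((1-x)/2)^2 + ε^2/((1+x)/2)^2) with hΦdef
    have hΦc : Continuous Φ := by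
      apply Continuous.add (continuous_const.mul continuous_id)
      exact continuous_const.mul (((continuous_pow 2).div_const _).add
        ((continuous_pow 2).div_const _))
    have hΦ0 : Tendsto Φ (𝓝[>] (0:ℝ)) (𝓝 0) := by
      have h := (hΦc.tendsto 0).mono_left (nhdsWithin_le_nhds (s := Ioi (0:ℝ)))
      have : Φ 0 = 0 := by simp [hΦdef]
      rwa [this] at h
    filter_upwards [hΦ0.eventually_lt_const hδ, self_mem_nhdsWithin] with ε h1 h2 x' hx'
    have hε : (0:ℝ) < ε := h2
    have hx'I := hsub x' hx'
    rw [Real.dist_eq, abs_sub_comm]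
    calc |(∫ y in Icc (-1:ℝ) 1, (y-x')/((y-x')^2+ε^2) * f y)
          - ((∫ y in Icc (-1:ℝ) 1, (f y - f x')/(y-x'))
            + f x' * Real.log ((1-x')/(1+x')))|
        ≤ Real.pi * K * ε + M * (ε^2/(1-x')^2 + ε^2/(1+x')^2) :=
          Gbound f K hf hmeas hcf M hM x' hx'I ε hε
      _ ≤ Φ ε := by
          rw [hΦdef]
          have e1 : ((1-x)/2)^2 ≤ (1-x')^2 := by
            apply pow_le_pow_left₀ hd1.le
            obtain ⟨a1, a2⟩ := hx'; linarith
          have e2 : ((1+x)/2)^2 ≤ (1+x')^2 := by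
            apply pow_le_pow_left₀ hd2.le
            obtain ⟨a1, a2⟩ := hx'; linarith
          have g1 : ε^2/(1-x')^2 ≤ ε^2/((1-x)/2)^2 :=
            div_le_div_of_nonneg_left (by positivity) (by positivity) e1
          have g2 : ε^2/(1+x')^2 ≤ ε^2/((1+x)/2)^2 :=
            div_le_div_of_nonneg_left (by positivity) (by positivity) e2
          have := mul_le_mul_of_nonneg_left (add_le_add g1 g2) hM0
          linarith
      _ < δ := h1
  · -- derivatives exist
    filter_upwards [self_mem_nhdsWithin] with ε hε x' _
    exact P1 f M hM hcf ε hε x'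
  · -- pointwise convergence
    intro x' _
    rw [tendsto_iff_dist_tendsto_zero]
    apply squeeze_zero' (Eventually.of_forall fun ε => dist_nonneg)
      (g := fun ε => (2 * M * ∫ y in Icc (-1:ℝ) 1, |y - x'| ^ (-(2⁻¹:ℝ))) * ε ^ (2⁻¹:ℝ))
    · filter_upwards [self_mem_nhdsWithin] with ε (hε : ε ∈ Ioi 0)
      rw [Real.dist_eq, abs_sub_comm]
      exact P7 f hmeas hcf M hM x' ε hε
    · have h := (Real.continuousAt_rpow_const 0 (2⁻¹:ℝ) (Or.inr (by norm_num))).tendsto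
      rw [Real.zero_rpow (by norm_num)] at h
      have h2 := (h.mono_left (nhdsWithin_le_nhds (s := Ioi (0:ℝ)))).const_mul
        (2 * M * ∫ y in Icc (-1:ℝ) 1, |y - x'| ^ (-(2⁻¹:ℝ)))
      simpa using h2

/-- For `f` Lipschitz on `[−1,1]` and
`g(x) = ∫_{−1}^1 ln(1/|x−y|) f(y) dy`, the function `g` is differentiable at each
`x ∈ (−1,1)` with `g′(x) = ∫_{−1}^1 (f(y)−f(x))/(y−x) dy + f(x) ln((1−x)/(1+x))`;
in particular `F(x) = ∫_{−1}^1 ln(1/|x−y|) dy` satisfies `F′(x) = ln((1−x)/(1+x))`. -/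
theorem stmt_10 (f : ℝ → ℝ) (K : NNReal) (hf : LipschitzOnWith K f (Icc (-1) 1)) :
    (∀ x ∈ Ioo (-1:ℝ) 1,
      HasDerivAt (fun x' => ∫ y in Icc (-1:ℝ) 1, Real.log (1 / |x' - y|) * f y)
        ((∫ y in Icc (-1:ℝ) 1, (f y - f x) / (y - x))
          + f x * Real.log ((1 - x) / (1 + x))) x) ∧
    (∀ x ∈ Ioo (-1:ℝ) 1,
      HasDerivAt (fun x' => ∫ y in Icc (-1:ℝ) 1, Real.log (1 / |x' - y|))
        (Real.log ((1 - x) / (1 + x))) x) := by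
  constructor
  · exact main_lemma f K hf
  · intro x hx
    have h1 := main_lemma (fun _ => (1:ℝ)) K
      (by intro a _ b _; simp : LipschitzOnWith K (fun _ : ℝ => (1:ℝ)) (Icc (-1) 1)) x hx
    simp only [sub_self, zero_div, integral_zero, one_mul, zero_add, mul_one] at h1
    exact h1
end

section
/- Let α ∈ (1,2). For every h > 0, (1/h) ∫₀^{1/2} (y^{α−2} − (y+h)^{α−2}) y^{2−α} dy = ∫_{2h}^{∞} (1 − (1+s)^{α−2}) s^{−2} ds, and this quantity tends to +∞ as h → 0⁺. (Consequently, the potential x ↦ ∫ |x−y|^{α−1} ((y)_+)^{2−α} dy on (−1,1) fails to be twice differentiable at 0.) -/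
open MeasureTheory Set Filter Topology

private lemma aux_nonneg {β : ℝ} (hβ : β ≤ 0) {s : ℝ} (hs : 0 < s) :
    0 ≤ (1 - (1 + s) ^ β) * s ^ (-2 : ℝ) := by
  apply mul_nonneg
  · have h1 : (1 + s) ^ β ≤ 1 :=
      Real.rpow_le_one_of_one_le_of_nonpos (by linarith) hβ
    linarith
  · positivity

private lemma aux_integrable {β : ℝ} (hβ : β ≤ 0) {a : ℝ} (ha : 0 < a) :
    IntegrableOn (fun s : ℝ => (1 - (1 + s) ^ β) * s ^ (-2 : ℝ)) (Ioi a) := by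
  have hbound : IntegrableOn (fun s : ℝ => s ^ (-2 : ℝ)) (Ioi a) :=
    integrableOn_Ioi_rpow_of_lt (by norm_num) ha
  apply Integrable.mono' hbound
  · apply ContinuousOn.aestronglyMeasurable _ measurableSet_Ioi
    apply ContinuousOn.mul
    · refine continuousOn_const.sub (ContinuousOn.rpow_const
        (continuousOn_const.add continuousOn_id) ?_)
      intro x hx
      have hx' : a < x := hx
      exact Or.inl (by intro hc; nlinarith)
    · refine ContinuousOn.rpow_const continuousOn_id ?_
      intro x hx
      have hx' : a < x := hx
      exact Or.inl (by intro hc; nlinarith)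
  · filter_upwards [ae_restrict_mem measurableSet_Ioi] with s hs
    have hs0 : 0 < s := ha.trans hs
    have h1 : (1 + s) ^ β ≤ 1 := Real.rpow_le_one_of_one_le_of_nonpos (by linarith) hβ
    have h2 : (0:ℝ) ≤ (1 + s) ^ β := Real.rpow_nonneg (by linarith) β
    rw [Real.norm_eq_abs, abs_of_nonneg (aux_nonneg hβ hs0)]
    calc (1 - (1 + s) ^ β) * s ^ (-2:ℝ) ≤ 1 * s ^ (-2:ℝ) :=
          mul_le_mul_of_nonneg_right (by linarith) (by positivity)
      _ = s ^ (-2:ℝ) := one_mul _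

private lemma aux_concave {γ : ℝ} (hγ0 : 0 < γ) (hγ1 : γ < 1) {s : ℝ}
    (hs0 : 0 ≤ s) (hs1 : s ≤ 1) :
    1 + s * ((2:ℝ) ^ γ - 1) ≤ (1 + s) ^ γ := by
  have hcon := Real.concaveOn_rpow hγ0.le hγ1.le
  have key := hcon.2 (mem_Ici.2 (by norm_num : (0:ℝ) ≤ 1))
    (mem_Ici.2 (by norm_num : (0:ℝ) ≤ 2))
    (by linarith : (0:ℝ) ≤ 1 - s) hs0 (by ring)
  simp only [smul_eq_mul, Real.one_rpow] at key
  have h12 : (1 - s) * 1 + s * 2 = 1 + s := by ring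
  rw [h12] at key
  linarith

private lemma aux_g_lower {γ : ℝ} (hγ0 : 0 < γ) (hγ1 : γ < 1) {s : ℝ}
    (hs0 : 0 < s) (hs1 : s ≤ 1) :
    ((2:ℝ) ^ γ - 1) / 2 ^ γ * s⁻¹ ≤ (1 - (1 + s) ^ (-γ)) * s ^ (-2 : ℝ) := by
  have hA : (0:ℝ) < (1 + s) ^ γ := Real.rpow_pos_of_pos (by linarith) γ
  have hA2 : (1 + s) ^ γ ≤ 2 ^ γ :=
    Real.rpow_le_rpow (by linarith) (by linarith) hγ0.le
  have h2γ : (0:ℝ) < 2 ^ γ := Real.rpow_pos_of_pos (by norm_num) γ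
  have hA1 : (1:ℝ) ≤ (1 + s) ^ γ := by
    have := Real.rpow_le_rpow zero_le_one (by linarith : (1:ℝ) ≤ 1 + s) hγ0.le
    simpa using this
  have hnum : s * ((2:ℝ) ^ γ - 1) ≤ (1 + s) ^ γ - 1 := by
    have := aux_concave hγ0 hγ1 hs0.le hs1
    linarith
  have hdiv : s * ((2:ℝ) ^ γ - 1) / 2 ^ γ ≤ ((1 + s) ^ γ - 1) / (1 + s) ^ γ :=
    div_le_div₀ (by linarith) hnum hA hA2
  have hrw : 1 - (1 + s) ^ (-γ) = ((1 + s) ^ γ - 1) / (1 + s) ^ γ := by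
    rw [Real.rpow_neg (by linarith : (0:ℝ) ≤ 1 + s)]
    field_simp
  have hs2 : s ^ (-2 : ℝ) = s⁻¹ * s⁻¹ := by
    rw [show (-2:ℝ) = (-1) + (-1) by norm_num, Real.rpow_add hs0,
      Real.rpow_neg_one]
  rw [hrw, hs2]
  calc ((2:ℝ) ^ γ - 1) / 2 ^ γ * s⁻¹
      = s * ((2:ℝ) ^ γ - 1) / 2 ^ γ * (s⁻¹ * s⁻¹) := by
        field_simp
    _ ≤ ((1 + s) ^ γ - 1) / (1 + s) ^ γ * (s⁻¹ * s⁻¹) :=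
        mul_le_mul_of_nonneg_right hdiv (by positivity)

/-- For `α ∈ (1,2)` and `h > 0`,
`(1/h) ∫₀^{1/2} (y^{α−2} − (y+h)^{α−2}) y^{2−α} dy = ∫_{2h}^∞ (1 − (1+s)^{α−2}) s^{−2} ds`,
and this tends to `+∞` as `h → 0⁺`. -/
theorem stmt_11 (α : ℝ) (hα : α ∈ Ioo (1:ℝ) 2) :
    (∀ h : ℝ, 0 < h →
      (1 / h) * ∫ y in Ioo (0:ℝ) (1/2), (y ^ (α - 2) - (y + h) ^ (α - 2)) * y ^ (2 - α)
        = ∫ s in Ioi (2 * h), (1 - (1 + s) ^ (α - 2)) * s ^ (-2 : ℝ)) ∧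
    Tendsto (fun h : ℝ =>
        (1 / h) * ∫ y in Ioo (0:ℝ) (1/2), (y ^ (α - 2) - (y + h) ^ (α - 2)) * y ^ (2 - α))
      (𝓝[>] 0) atTop := by
  obtain ⟨hα1, hα2⟩ := hα
  have hβ0 : α - 2 < 0 := by linarith
  have hγ0 : 0 < 2 - α := by linarith
  have hγ1 : 2 - α < 1 := by linarith
  -- Part 1: the change-of-variables identity
  have key : ∀ h : ℝ, 0 < h →
      (1 / h) * ∫ y in Ioo (0:ℝ) (1/2), (y ^ (α - 2) - (y + h) ^ (α - 2)) * y ^ (2 - α)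
        = ∫ s in Ioi (2 * h), (1 - (1 + s) ^ (α - 2)) * s ^ (-2 : ℝ) := by
    intro h hh
    have himg : (fun y : ℝ => h / y) '' Ioo 0 (1/2) = Ioi (2 * h) := by
      ext x
      simp only [mem_image, mem_Ioo, mem_Ioi]
      constructor
      · rintro ⟨y, ⟨hy0, hy2⟩, rfl⟩
        rw [lt_div_iff₀ hy0]
        nlinarith
      · intro hx
        have hx0 : 0 < x := lt_trans (by positivity) hx
        refine ⟨h / x, ⟨by positivity, ?_⟩, by field_simp⟩
        rw [div_lt_iff₀ hx0]
        linarith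
    have hderiv : ∀ y ∈ Ioo (0:ℝ) (1/2),
        HasDerivWithinAt (fun y : ℝ => h / y) (-(h / y ^ 2)) (Ioo 0 (1/2)) y := by
      intro y hy
      have hy0 : y ≠ 0 := ne_of_gt hy.1
      have H := (hasDerivAt_inv hy0).const_mul h
      have H2 : HasDerivAt (fun x : ℝ => h / x) (-(h / y ^ 2)) y := by
        simpa [div_eq_mul_inv, mul_neg] using H
      exact H2.hasDerivWithinAt
    have hinj : InjOn (fun y : ℝ => h / y) (Ioo 0 (1/2)) := by
      intro a ha b hb hab
      simp only at hab
      rw [div_eq_div_iff (ne_of_gt ha.1) (ne_of_gt hb.1)] at hab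
      exact (mul_left_cancel₀ (ne_of_gt hh) hab).symm
    rw [← himg,
      MeasureTheory.integral_image_eq_integral_abs_deriv_smul measurableSet_Ioo hderiv hinj,
      ← MeasureTheory.integral_const_mul]
    apply MeasureTheory.setIntegral_congr_fun measurableSet_Ioo
    intro y hy
    obtain ⟨hy0, hy2⟩ := hy
    have hyh : (0:ℝ) < y + h := by linarith
    have habs : |(-(h / y ^ 2))| = h / y ^ 2 := by
      rw [abs_neg, abs_of_pos (by positivity)]
    have e1 : y ^ (2 - α) = (y ^ (α - 2))⁻¹ := by
      rw [show (2 - α) = -(α - 2) by ring, Real.rpow_neg hy0.le]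
    have e2 : (1 + h / y) ^ (α - 2) = (y + h) ^ (α - 2) / y ^ (α - 2) := by
      rw [show (1 + h / y) = (y + h) / y by field_simp, Real.div_rpow hyh.le hy0.le]
    have e3 : (h / y) ^ (-2 : ℝ) = ((h / y) ^ 2)⁻¹ := by
      rw [show (-2:ℝ) = -((2:ℕ):ℝ) by norm_num, Real.rpow_neg (by positivity),
        Real.rpow_natCast]
    have hya : (0:ℝ) < y ^ (α - 2) := Real.rpow_pos_of_pos hy0 _
    simp only [smul_eq_mul, habs, e1, e2, e3]
    field_simp
  refine ⟨key, ?_⟩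
  -- Part 2: divergence
  set c : ℝ := ((2:ℝ) ^ (2 - α) - 1) / 2 ^ (2 - α) with hc_def
  have h2γ : (0:ℝ) < 2 ^ (2 - α) := Real.rpow_pos_of_pos (by norm_num) _
  have h2γ1 : (1:ℝ) < 2 ^ (2 - α) := by
    rw [show (1:ℝ) = (2:ℝ) ^ (0:ℝ) by simp]
    exact Real.rpow_lt_rpow_left_iff (by norm_num) |>.mpr hγ0
  have hc : 0 < c := by
    apply div_pos (by linarith) h2γ
  have hlow : ∀ h : ℝ, h ∈ Ioo (0:ℝ) (1/2) →
      c * Real.log (1 / (2 * h)) ≤ ∫ s in Ioi (2 * h), (1 - (1 + s) ^ (α - 2)) * s ^ (-2:ℝ) := by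
    intro h hh
    obtain ⟨hh0, hh2⟩ := hh
    have h2h0 : 0 < 2 * h := by linarith
    have h2h1 : 2 * h < 1 := by linarith
    have hint : IntegrableOn (fun s : ℝ => (1 - (1 + s) ^ (α - 2)) * s ^ (-2:ℝ))
        (Ioi (2 * h)) := aux_integrable hβ0.le h2h0
    have step1 : ∫ s in Ioc (2 * h) 1, c * s⁻¹
        ≤ ∫ s in Ioc (2 * h) 1, (1 - (1 + s) ^ (α - 2)) * s ^ (-2:ℝ) := by
      apply MeasureTheory.setIntegral_mono_on
      · have hinv : IntervalIntegrable (fun s : ℝ => s⁻¹) volume (2 * h) 1 := by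
          apply intervalIntegral.intervalIntegrable_inv _ continuousOn_id
          intro x hx
          rw [uIcc_of_le h2h1.le] at hx
          exact ne_of_gt (lt_of_lt_of_le h2h0 hx.1)
        exact ((intervalIntegrable_iff_integrableOn_Ioc_of_le h2h1.le).mp hinv).const_mul c
      · exact hint.mono_set (fun x hx => hx.1)
      · exact measurableSet_Ioc
      · intro x hx
        have hx0 : 0 < x := h2h0.trans hx.1
        have := aux_g_lower hγ0 hγ1 hx0 hx.2
        rw [show -(2 - α) = α - 2 by ring] at this
        exact this
    have step2 : ∫ s in Ioc (2 * h) 1, (1 - (1 + s) ^ (α - 2)) * s ^ (-2:ℝ)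
        ≤ ∫ s in Ioi (2 * h), (1 - (1 + s) ^ (α - 2)) * s ^ (-2:ℝ) := by
      apply MeasureTheory.setIntegral_mono_set hint
      · filter_upwards [ae_restrict_mem measurableSet_Ioi] with s hs
        exact aux_nonneg hβ0.le (h2h0.trans hs)
      · exact Filter.Eventually.of_forall (fun x hx => hx.1)
    have heval : ∫ s in Ioc (2 * h) 1, c * s⁻¹ = c * Real.log (1 / (2 * h)) := by
      rw [← intervalIntegral.integral_of_le h2h1.le, intervalIntegral.integral_const_mul,
        integral_inv_of_pos h2h0 one_pos]
    linarith [heval ▸ step1.trans step2]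
  have hlim : Tendsto (fun h : ℝ => c * Real.log (1 / (2 * h))) (𝓝[>] (0:ℝ)) atTop := by
    apply Tendsto.const_mul_atTop hc
    have h2h : Tendsto (fun h : ℝ => 2 * h) (𝓝[>] (0:ℝ)) (𝓝[>] (0:ℝ)) := by
      apply tendsto_nhdsWithin_of_tendsto_nhds_of_eventually_within
      · have : Tendsto (fun h : ℝ => 2 * h) (𝓝 (0:ℝ)) (𝓝 (2 * 0)) :=
          (continuous_const.mul continuous_id).tendsto 0
        simpa using this.mono_left nhdsWithin_le_nhds
      · filter_upwards [self_mem_nhdsWithin] with x hx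
        show (0:ℝ) < 2 * x
        exact mul_pos two_pos (mem_Ioi.mp hx)
    have hlog : Tendsto (fun h : ℝ => Real.log (1 / (2 * h))) (𝓝[>] (0:ℝ)) atTop := by
      simp only [one_div, Real.log_inv]
      exact (tendsto_neg_atBot_atTop.comp Real.tendsto_log_nhdsGT_zero).comp h2h
    exact hlog
  apply tendsto_atTop_mono' _ _ hlim
  filter_upwards [Ioo_mem_nhdsGT_of_mem (show (0:ℝ) ∈ Ico (0:ℝ) (1/2) by constructor <;> norm_num)]
    with h hh
  rw [key h hh.1]
  exact hlow h hh
end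

section
/- Let d ≥ 3 and let G : (0,1/2] → [0,∞) be twice continuously differentiable with G′ of constant sign on (0,1/2] (that is, G′(t) ≥ 0 for all t ∈ (0,1/2], or G′(t) ≤ 0 for all t ∈ (0,1/2]). If ∫₀^{1/2} |G″(t)| t^{d−1} dt < ∞, then ∫₀^{1/2} G(t) t^{d−3} dt < ∞ (and the limit lim_{t→0⁺} G(t) t^{d−2} exists and is finite). -/
open MeasureTheory Set Filter Topology intervalIntegral

/-- Continuity of `s ↦ ∫_s^b ψ` on `[t,b]`. -/
lemma contPrim {b t : ℝ} (htb : t ≤ b) {ψ : ℝ → ℝ} (hψ : ContinuousOn ψ (Icc t b)) :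
    ContinuousOn (fun s => ∫ u in s..b, ψ u) (Icc t b) := by
  have hInt : IntegrableOn ψ (uIcc t b) := by
    rw [uIcc_of_le htb]; exact hψ.integrableOn_Icc
  have hF : ContinuousOn (fun x => ∫ u in t..x, ψ u) (uIcc t b) :=
    intervalIntegral.continuousOn_primitive_interval hInt
  rw [uIcc_of_le htb] at hF
  have key : ∀ s ∈ Icc t b, (∫ u in s..b, ψ u) = (∫ u in t..b, ψ u) - ∫ u in t..s, ψ u := by
    intro s hs
    have h1 : IntervalIntegrable ψ volume t s := by
      apply ContinuousOn.intervalIntegrable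
      rw [uIcc_of_le hs.1]
      exact hψ.mono (Icc_subset_Icc le_rfl hs.2)
    have h2 : IntervalIntegrable ψ volume s b := by
      apply ContinuousOn.intervalIntegrable
      rw [uIcc_of_le hs.2]
      exact hψ.mono (Icc_subset_Icc hs.1 le_rfl)
    rw [← intervalIntegral.integral_add_adjacent_intervals h1 h2]
    ring
  exact (continuousOn_const.sub hF).congr key

/-- Integration by parts inequality. -/
lemma partsP {b : ℝ} (hb : 0 < b) {ψ : ℝ → ℝ} (hψc : ContinuousOn ψ (Ioc 0 b))
    (hψ0 : ∀ s ∈ Ioc 0 b, 0 ≤ ψ s) (k : ℕ) {t : ℝ} (ht : t ∈ Ioc 0 b) :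
    ∫ s in t..b, s ^ k * (∫ u in s..b, ψ u) ≤
      (1 / (k + 1 : ℝ)) * ∫ s in t..b, ψ s * s ^ (k + 1) := by
  obtain ⟨ht0, htb⟩ := ht
  have hIccsub : Icc t b ⊆ Ioc 0 b := fun x hx => ⟨lt_of_lt_of_le ht0 hx.1, hx.2⟩
  have hψIcc : ContinuousOn ψ (Icc t b) := hψc.mono hIccsub
  set N : ℝ → ℝ := fun s => ∫ u in s..b, ψ u with hN
  have hNc : ContinuousOn N (Icc t b) := contPrim htb hψIcc
  have hk1 : (0:ℝ) < (k + 1 : ℝ) := by positivity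
  -- φ s = s^(k+1)/(k+1) * N s
  set φ : ℝ → ℝ := fun s => s ^ (k + 1) / (k + 1 : ℝ) * N s with hφ
  set g : ℝ → ℝ := fun s => s ^ k * N s - s ^ (k + 1) / (k + 1 : ℝ) * ψ s with hg
  have hgc : ContinuousOn g (Icc t b) := by
    apply ContinuousOn.sub
    · exact (continuous_pow k).continuousOn.mul hNc
    · exact (((continuous_pow (k+1)).continuousOn).div_const _).mul hψIcc
  have hginteg : IntervalIntegrable g volume t b := by
    apply ContinuousOn.intervalIntegrable; rwa [uIcc_of_le htb]
  have hderiv : ∀ s ∈ Ioo t b, HasDerivWithinAt φ (g s) (Ioi s) s := by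
    intro s hs
    have hs0 : 0 < s := lt_trans ht0 hs.1
    have hsIoc : s ∈ Ioc 0 b := ⟨hs0, hs.2.le⟩
    have hnb : Ioc (0:ℝ) b ∈ 𝓝 s := by
      apply mem_nhds_iff.2 ⟨Ioo 0 b, Ioo_subset_Ioc_self, isOpen_Ioo, ⟨hs0, hs.2⟩⟩
    have hψs : ContinuousAt ψ s := hψc.continuousAt hnb
    have hint1 : IntervalIntegrable ψ volume s b := by
      apply ContinuousOn.intervalIntegrable
      rw [uIcc_of_le hs.2.le]
      exact hψc.mono (fun x hx => ⟨lt_of_lt_of_le hs0 hx.1, hx.2⟩)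
    have hNd : HasDerivAt N (-ψ s) s := by
      apply intervalIntegral.integral_hasDerivAt_left hint1 ?_ hψs
      exact ⟨Ioc 0 b, hnb, hψc.aestronglyMeasurable measurableSet_Ioc⟩
    have hpow := ((hasDerivAt_pow (k+1) s).div_const ((k:ℝ)+1)).mul hNd
    have heq : (↑(k+1) * s ^ (k + 1 - 1) / ((k:ℝ)+1)) * N s + s ^ (k+1) / ((k:ℝ)+1) * (-ψ s)
        = g s := by
      simp only [Nat.add_sub_cancel, hg]
      push_cast
      field_simp
      ring
    exact (heq ▸ hpow).hasDerivWithinAt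
  have hφc : ContinuousOn φ (Icc t b) :=
    (((continuous_pow (k+1)).continuousOn).div_const _).mul hNc
  have hFTC : ∫ s in t..b, g s = φ b - φ t :=
    integral_eq_sub_of_hasDeriv_right_of_le htb hφc hderiv hginteg
  have hNt : 0 ≤ N t := by
    apply intervalIntegral.integral_nonneg htb
    intro u hu
    exact hψ0 u ⟨lt_of_lt_of_le ht0 hu.1, hu.2⟩
  have hφb : φ b = 0 := by simp [hφ, hN, intervalIntegral.integral_same]
  have hφt : 0 ≤ φ t := by
    apply mul_nonneg _ hNt
    positivity
  have hgle : ∫ s in t..b, g s ≤ 0 := by rw [hFTC, hφb]; linarith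
  have hi1 : IntervalIntegrable (fun s => s ^ k * N s) volume t b := by
    apply ContinuousOn.intervalIntegrable
    rw [uIcc_of_le htb]
    exact (continuous_pow k).continuousOn.mul hNc
  have hi2 : IntervalIntegrable (fun s => s ^ (k+1) / ((k:ℝ)+1) * ψ s) volume t b := by
    apply ContinuousOn.intervalIntegrable
    rw [uIcc_of_le htb]
    exact (((continuous_pow (k+1)).continuousOn).div_const _).mul hψIcc
  have hsplit : ∫ s in t..b, g s
      = (∫ s in t..b, s ^ k * N s) - ∫ s in t..b, s ^ (k+1) / ((k:ℝ)+1) * ψ s :=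
    intervalIntegral.integral_sub hi1 hi2
  have hre : ∫ s in t..b, s ^ (k+1) / ((k:ℝ)+1) * ψ s
      = (1 / ((k:ℝ)+1)) * ∫ s in t..b, ψ s * s ^ (k+1) := by
    rw [← intervalIntegral.integral_const_mul]
    apply intervalIntegral.integral_congr
    intro s _
    field_simp
  rw [hsplit, hre] at hgle
  push_cast
  linarith

/-- If the integrals `∫_t^b f` are uniformly bounded for a nonnegative continuous `f`,
then the lintegral over `(0,b]` is bounded. -/
lemma boundLint {b : ℝ} (hb : 0 < b) {f : ℝ → ℝ} (hfc : ContinuousOn f (Ioc 0 b))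
    (hf0 : ∀ t ∈ Ioc 0 b, 0 ≤ f t) {B : ℝ} (hB : ∀ t ∈ Ioc 0 b, ∫ s in t..b, f s ≤ B) :
    ∫⁻ t in Ioc 0 b, ENNReal.ofReal (f t) ≤ ENNReal.ofReal B := by
  set a : ℕ → ℝ := fun n => b / (n + 1) with ha
  have ha0 : ∀ n, 0 < a n := fun n => by positivity
  have hab : ∀ n, a n ≤ b := fun n => by
    rw [ha]
    apply div_le_self hb.le
    have : (0:ℝ) ≤ (n:ℝ) := Nat.cast_nonneg n
    linarith
  have hanti : Antitone a := by
    intro m n h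
    show b / ((n:ℝ) + 1) ≤ b / ((m:ℝ) + 1)
    gcongr
  set S : ℕ → Set ℝ := fun n => Ioc (a n) b with hS
  have hSsub : ∀ n, S n ⊆ Ioc 0 b := fun n x hx => ⟨lt_trans (ha0 n) hx.1, hx.2⟩
  set g : ℕ → ℝ → ENNReal := fun n => (S n).indicator (fun t => ENNReal.ofReal (f t)) with hg
  have hmono : Monotone g := by
    intro m n h
    exact Set.indicator_le_indicator_of_subset (Ioc_subset_Ioc_left (hanti h))
      (fun x => zero_le)
  have haem : ∀ n, AEMeasurable (g n) (volume.restrict (Ioc 0 b)) := by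
    intro n
    exact ((ENNReal.measurable_ofReal.comp_aemeasurable
      (hfc.aemeasurable measurableSet_Ioc))).indicator measurableSet_Ioc
  have key : ∀ t ∈ Ioc 0 b, (⨆ n, g n t) = ENNReal.ofReal (f t) := by
    intro t ht
    apply le_antisymm
    · exact iSup_le fun n => Set.indicator_le_self' (fun _ _ => zero_le) t
    · obtain ⟨n, hn⟩ := exists_nat_gt (b / t)
      have h1 : b / t < (n:ℝ) + 1 := by linarith
      have h2 : a n < t := by
        rw [ha, div_lt_iff₀ (by positivity)]
        rw [div_lt_iff₀ ht.1] at h1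
        linarith
      have heq : g n t = ENNReal.ofReal (f t) :=
        Set.indicator_of_mem (show t ∈ S n from ⟨h2, ht.2⟩)
          (fun t => ENNReal.ofReal (f t))
      exact le_iSup_of_le n heq.ge
  calc ∫⁻ t in Ioc 0 b, ENNReal.ofReal (f t)
      = ∫⁻ t in Ioc 0 b, ⨆ n, g n t := by
        apply setLIntegral_congr_fun measurableSet_Ioc
        exact fun t ht => (key t ht).symm
    _ = ⨆ n, ∫⁻ t in Ioc 0 b, g n t :=
        lintegral_iSup' haem (ae_of_all _ fun t => fun m n h => hmono h t)
    _ ≤ ENNReal.ofReal B := by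
        apply iSup_le
        intro n
        have hmS : MeasurableSet (S n) := measurableSet_Ioc
        have hres : ∫⁻ t in Ioc 0 b, g n t = ∫⁻ t in S n, ENNReal.ofReal (f t) := by
          show ∫⁻ t in Ioc 0 b, (S n).indicator (fun t => ENNReal.ofReal (f t)) t = _
          rw [lintegral_indicator hmS, Measure.restrict_restrict hmS,
            Set.inter_eq_self_of_subset_left (hSsub n)]
        rw [hres]
        have hint : IntegrableOn f (S n) := by
          have hIcc : Icc (a n) b ⊆ Ioc 0 b := fun x hx => ⟨lt_of_lt_of_le (ha0 n) hx.1, hx.2⟩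
          exact ((hfc.mono hIcc).integrableOn_Icc).mono_set Ioc_subset_Icc_self
        have hae : 0 ≤ᵐ[volume.restrict (S n)] f :=
          ae_restrict_of_forall_mem hmS (fun x hx => hf0 x (hSsub n hx))
        rw [← MeasureTheory.ofReal_integral_eq_lintegral_ofReal hint hae]
        apply ENNReal.ofReal_le_ofReal
        rw [show ∫ t in S n, f t = ∫ s in (a n)..b, f s from
          (intervalIntegral.integral_of_le (hab n)).symm]
        exact hB (a n) ⟨ha0 n, hab n⟩

/-- FTC on `[t,b] ⊆ (0,b]`. -/
lemma ftcIoc {b : ℝ} {F F' : ℝ → ℝ} (hc : ContinuousOn F (Ioc 0 b))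
    (hd : ∀ s ∈ Ioo (0:ℝ) b, HasDerivAt F (F' s) s) (hF'i : ContinuousOn F' (Ioc 0 b))
    {t : ℝ} (ht : t ∈ Ioc 0 b) : ∫ s in t..b, F' s = F b - F t := by
  have hIcc : Icc t b ⊆ Ioc 0 b := fun x hx => ⟨lt_of_lt_of_le ht.1 hx.1, hx.2⟩
  apply integral_eq_sub_of_hasDeriv_right_of_le ht.2 (hc.mono hIcc)
    (fun s hs => (hd s ⟨lt_trans ht.1 hs.1, hs.2⟩).hasDerivWithinAt)
  apply ContinuousOn.intervalIntegrable
  rw [uIcc_of_le ht.2]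
  exact hF'i.mono hIcc

/-- Let `d ≥ 3` and `G : (0,1/2] → [0,∞)` be twice continuously
differentiable with `G′` of constant sign. If `∫₀^{1/2} |G″(t)| t^{d−1} dt < ∞`, then
`∫₀^{1/2} G(t) t^{d−3} dt < ∞` and `lim_{t→0⁺} G(t) t^{d−2}` exists and is finite. -/
theorem stmt_13 (d : ℕ) (hd : 3 ≤ d) (G G' G'' : ℝ → ℝ)
    (hG0 : ∀ t ∈ Ioc (0:ℝ) (1/2), 0 ≤ G t)
    (hG'd : ∀ t ∈ Ioc (0:ℝ) (1/2), HasDerivWithinAt G (G' t) (Ioc 0 (1/2)) t)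
    (hG''d : ∀ t ∈ Ioc (0:ℝ) (1/2), HasDerivWithinAt G' (G'' t) (Ioc 0 (1/2)) t)
    (hG''c : ContinuousOn G'' (Ioc 0 (1/2)))
    (hsign : (∀ t ∈ Ioc (0:ℝ) (1/2), 0 ≤ G' t) ∨ (∀ t ∈ Ioc (0:ℝ) (1/2), G' t ≤ 0))
    (hfin : ∫⁻ t in Ioc (0:ℝ) (1/2), ENNReal.ofReal (|G'' t| * t ^ ((d:ℝ) - 1)) < ⊤) :
    (∫⁻ t in Ioc (0:ℝ) (1/2), ENNReal.ofReal (G t * t ^ ((d:ℝ) - 3)) < ⊤) ∧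
    ∃ L : ℝ, Tendsto (fun t => G t * t ^ ((d:ℝ) - 2)) (𝓝[>] 0) (𝓝 L) := by
  clear hsign
  have hb : (0:ℝ) < 1/2 := by norm_num
  obtain ⟨e, rfl⟩ : ∃ e, d = e + 3 := ⟨d - 3, by omega⟩
  clear hd
  -- cast lemmas
  have hc1 : ∀ t : ℝ, 0 < t → t ^ (((e+3:ℕ):ℝ) - 1) = t ^ (e+2) := by
    intro t ht
    rw [show ((e+3:ℕ):ℝ) - 1 = ((e+2:ℕ):ℝ) by push_cast; ring, Real.rpow_natCast]
  have hc3 : ∀ t : ℝ, 0 < t → t ^ (((e+3:ℕ):ℝ) - 3) = t ^ e := by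
    intro t ht
    rw [show ((e+3:ℕ):ℝ) - 3 = ((e:ℕ):ℝ) by push_cast; ring, Real.rpow_natCast]
  have hc2 : ∀ t : ℝ, 0 < t → t ^ (((e+3:ℕ):ℝ) - 2) = t ^ (e+1) := by
    intro t ht
    rw [show ((e+3:ℕ):ℝ) - 2 = ((e+1:ℕ):ℝ) by push_cast; ring, Real.rpow_natCast]
  -- continuity
  have hGc : ContinuousOn G (Ioc 0 (1/2:ℝ)) := fun t ht => (hG'd t ht).continuousWithinAt
  have hG'c : ContinuousOn G' (Ioc 0 (1/2:ℝ)) := fun t ht => (hG''d t ht).continuousWithinAt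
  have hnb : ∀ s ∈ Ioo (0:ℝ) (1/2), Ioc (0:ℝ) (1/2) ∈ 𝓝 s := fun s hs =>
    mem_nhds_iff.2 ⟨Ioo 0 (1/2), Ioo_subset_Ioc_self, isOpen_Ioo, hs⟩
  have hGd : ∀ s ∈ Ioo (0:ℝ) (1/2), HasDerivAt G (G' s) s := fun s hs =>
    (hG'd s (Ioo_subset_Ioc_self hs)).hasDerivAt (hnb s hs)
  have hG'dd : ∀ s ∈ Ioo (0:ℝ) (1/2), HasDerivAt G' (G'' s) s := fun s hs =>
    (hG''d s (Ioo_subset_Ioc_self hs)).hasDerivAt (hnb s hs)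
  -- the master integrable function ψ₂ = |G''| t^{e+2}
  set ψ₂ : ℝ → ℝ := fun t => |G'' t| * t ^ (e+2) with hψ₂
  have hψ₂c : ContinuousOn ψ₂ (Ioc 0 (1/2:ℝ)) := hG''c.abs.mul (continuous_pow _).continuousOn
  have hψ₂0 : ∀ t ∈ Ioc (0:ℝ) (1/2), 0 ≤ ψ₂ t := fun t ht =>
    mul_nonneg (abs_nonneg _) (pow_nonneg ht.1.le _)
  have hfin' : ∫⁻ t in Ioc (0:ℝ) (1/2), ENNReal.ofReal (ψ₂ t) < ⊤ := by
    refine lt_of_eq_of_lt ?_ hfin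
    apply setLIntegral_congr_fun measurableSet_Ioc
    exact fun t ht => by beta_reduce; rw [hψ₂]; rw [hc1 t ht.1]
  have hψ₂int : IntegrableOn ψ₂ (Ioc (0:ℝ) (1/2)) := by
    refine ⟨hψ₂c.aestronglyMeasurable measurableSet_Ioc, ?_⟩
    rw [hasFiniteIntegral_iff_ofReal (ae_restrict_of_forall_mem measurableSet_Ioc hψ₂0)]
    exact hfin'
  set A := ∫ t in Ioc (0:ℝ) (1/2), ψ₂ t with hA
  have hA0 : 0 ≤ A := setIntegral_nonneg measurableSet_Ioc hψ₂0
  have hAt : ∀ t ∈ Ioc (0:ℝ) (1/2), ∫ s in t..(1/2:ℝ), ψ₂ s ≤ A := by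
    intro t ht
    rw [intervalIntegral.integral_of_le ht.2, hA]
    apply setIntegral_mono_set hψ₂int
      (ae_restrict_of_forall_mem measurableSet_Ioc hψ₂0)
      ((Ioc_subset_Ioc_left ht.1.le).eventuallyLE)
  -- FTC for G' and pointwise bound on |G'|
  have hFTCG' : ∀ s ∈ Ioc (0:ℝ) (1/2), ∫ u in s..(1/2:ℝ), G'' u = G' (1/2) - G' s :=
    fun s hs => ftcIoc hG'c hG'dd hG''c hs
  have hG'bd : ∀ s ∈ Ioc (0:ℝ) (1/2),
      |G' s| ≤ |G' (1/2)| + ∫ u in s..(1/2:ℝ), |G'' u| := by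
    intro s hs
    have h1 : G' s = G' (1/2) - ∫ u in s..(1/2:ℝ), G'' u := by
      rw [hFTCG' s hs]; ring
    calc |G' s| ≤ |G' (1/2)| + |∫ u in s..(1/2:ℝ), G'' u| := by
          rw [h1]; exact abs_sub _ _
      _ ≤ |G' (1/2)| + ∫ u in s..(1/2:ℝ), |G'' u| := by
          gcongr
          exact intervalIntegral.abs_integral_le_integral_abs hs.2
  -- constant and bounds on G
  set C₂ : ℝ := G (1/2) + |G' (1/2)| * (1/2) with hC₂
  have hC₂0 : 0 ≤ C₂ := add_nonneg (hG0 _ ⟨hb, le_rfl⟩) (by positivity)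
  set ψ₁ : ℝ → ℝ := fun u => |G'' u| * u with hψ₁
  have hψ₁c : ContinuousOn ψ₁ (Ioc 0 (1/2:ℝ)) := hG''c.abs.mul continuousOn_id
  have hψ₁0 : ∀ u ∈ Ioc (0:ℝ) (1/2), 0 ≤ ψ₁ u := fun u hu =>
    mul_nonneg (abs_nonneg _) hu.1.le
  have habs : ContinuousOn (fun u => |G'' u|) (Ioc 0 (1/2:ℝ)) := hG''c.abs
  have h1e : ∀ c : ℝ, 0 < c → 1 ≤ c → ∀ x : ℝ, x ≤ A → (1/c) * x ≤ A := by
    intro c hc hc1 x hx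
    have hxA : (1/c) * x ≤ (1/c) * A ∨ True := Or.inr trivial
    have h1 : (1/c) ≤ 1 := by rw [div_le_one hc]; exact hc1
    have h2 : 0 < 1/c := by positivity
    nlinarith
  have hGbd : ∀ t ∈ Ioc (0:ℝ) (1/2), G t ≤ C₂ + ∫ s in t..(1/2:ℝ), ψ₁ s := by
    intro t ht
    have hIcc : Icc t (1/2:ℝ) ⊆ Ioc 0 (1/2) := fun x hx => ⟨lt_of_lt_of_le ht.1 hx.1, hx.2⟩
    have hFTCG : ∫ s in t..(1/2:ℝ), G' s = G (1/2) - G t := ftcIoc hGc hGd hG'c ht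
    have hNc : ContinuousOn (fun s => ∫ u in s..(1/2:ℝ), |G'' u|) (Icc t (1/2)) :=
      contPrim ht.2 (habs.mono hIcc)
    have hint1 : IntervalIntegrable (fun s => |G' s|) volume t (1/2) := by
      apply ContinuousOn.intervalIntegrable
      rw [uIcc_of_le ht.2]
      exact (hG'c.mono hIcc).abs
    have hintN : IntervalIntegrable (fun s => ∫ u in s..(1/2:ℝ), |G'' u|) volume t (1/2) := by
      apply ContinuousOn.intervalIntegrable
      rw [uIcc_of_le ht.2]
      exact hNc
    have hint2 : IntervalIntegrable
        (fun s => |G' (1/2)| + ∫ u in s..(1/2:ℝ), |G'' u|) volume t (1/2) :=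
      intervalIntegrable_const.add hintN
    have step1 : ∫ s in t..(1/2:ℝ), |G' s|
        ≤ ∫ s in t..(1/2:ℝ), (|G' (1/2)| + ∫ u in s..(1/2:ℝ), |G'' u|) :=
      intervalIntegral.integral_mono_on ht.2 hint1 hint2 (fun s hs => hG'bd s (hIcc hs))
    have step2 : ∫ s in t..(1/2:ℝ), (|G' (1/2)| + ∫ u in s..(1/2:ℝ), |G'' u|)
        = |G' (1/2)| * (1/2 - t) + ∫ s in t..(1/2:ℝ), (∫ u in s..(1/2:ℝ), |G'' u|) := by
      rw [intervalIntegral.integral_add intervalIntegrable_const hintN,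
        intervalIntegral.integral_const, smul_eq_mul]
      ring
    have step3 : ∫ s in t..(1/2:ℝ), (∫ u in s..(1/2:ℝ), |G'' u|)
        ≤ ∫ s in t..(1/2:ℝ), ψ₁ s := by
      have hp := partsP hb habs (fun u _ => abs_nonneg _) 0 ht
      simp only [pow_zero, one_mul, pow_one, zero_add, Nat.cast_zero] at hp
      calc ∫ s in t..(1/2:ℝ), (∫ u in s..(1/2:ℝ), |G'' u|)
          ≤ (1/(0+1:ℝ)) * ∫ s in t..(1/2:ℝ), |G'' s| * s := by
            convert hp using 2 <;> norm_num
        _ = ∫ s in t..(1/2:ℝ), ψ₁ s := by rw [hψ₁]; norm_num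
    have hGeq : G t = G (1/2) - ∫ s in t..(1/2:ℝ), G' s := by rw [hFTCG]; ring
    have habsint : |∫ s in t..(1/2:ℝ), G' s| ≤ ∫ s in t..(1/2:ℝ), |G' s| :=
      intervalIntegral.abs_integral_le_integral_abs ht.2
    have hneg : -(∫ s in t..(1/2:ℝ), G' s) ≤ |∫ s in t..(1/2:ℝ), G' s| := neg_le_abs _
    have hconst : |G' (1/2)| * (1/2 - t) ≤ |G' (1/2)| * (1/2) := by
      have := abs_nonneg (G' (1/2))
      nlinarith [ht.1]
    rw [hGeq, hC₂]
    linarith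
  -- uniform bound for ∫ G s * s^e
  have hB1 : ∀ t ∈ Ioc (0:ℝ) (1/2), ∫ s in t..(1/2:ℝ), G s * s ^ e ≤ C₂ + A := by
    intro t ht
    have hIcc : Icc t (1/2:ℝ) ⊆ Ioc 0 (1/2) := fun x hx => ⟨lt_of_lt_of_le ht.1 hx.1, hx.2⟩
    have hMc : ContinuousOn (fun s => ∫ u in s..(1/2:ℝ), ψ₁ u) (Icc t (1/2)) :=
      contPrim ht.2 (hψ₁c.mono hIcc)
    have hint1 : IntervalIntegrable (fun s => G s * s ^ e) volume t (1/2) := by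
      apply ContinuousOn.intervalIntegrable
      rw [uIcc_of_le ht.2]
      exact (hGc.mono hIcc).mul (continuous_pow e).continuousOn
    have hintC : IntervalIntegrable (fun s => C₂ * s ^ e) volume t (1/2) :=
      ((continuous_pow e).intervalIntegrable t (1/2)).const_mul C₂
    have hintM : IntervalIntegrable (fun s => s ^ e * ∫ u in s..(1/2:ℝ), ψ₁ u)
        volume t (1/2) := by
      apply ContinuousOn.intervalIntegrable
      rw [uIcc_of_le ht.2]
      exact (continuous_pow e).continuousOn.mul hMc
    have step1 : ∫ s in t..(1/2:ℝ), G s * s ^ e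
        ≤ ∫ s in t..(1/2:ℝ), (C₂ * s ^ e + s ^ e * ∫ u in s..(1/2:ℝ), ψ₁ u) := by
      apply intervalIntegral.integral_mono_on ht.2 hint1 (hintC.add hintM)
      intro s hs
      have hs0 : 0 < s := lt_of_lt_of_le ht.1 hs.1
      have := hGbd s (hIcc hs)
      nlinarith [pow_nonneg hs0.le e]
    rw [intervalIntegral.integral_add hintC hintM] at step1
    have stepC : ∫ s in t..(1/2:ℝ), C₂ * s ^ e ≤ C₂ := by
      have hmono : ∫ s in t..(1/2:ℝ), C₂ * s ^ e ≤ ∫ s in t..(1/2:ℝ), C₂ := by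
        apply intervalIntegral.integral_mono_on ht.2 hintC intervalIntegrable_const
        intro s hs
        have hs0 : 0 < s := lt_of_lt_of_le ht.1 hs.1
        have hse : s ^ e ≤ 1 := by
          calc s ^ e ≤ 1 ^ e := pow_le_pow_left₀ hs0.le (by linarith [hs.2]) e
            _ = 1 := one_pow e
        nlinarith
      have : ∫ s in t..(1/2:ℝ), C₂ = (1/2 - t) * C₂ := by
        rw [intervalIntegral.integral_const, smul_eq_mul]
      rw [this] at hmono
      calc ∫ s in t..(1/2:ℝ), C₂ * s ^ e ≤ (1/2 - t) * C₂ := hmono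
        _ ≤ 1 * C₂ := mul_le_mul_of_nonneg_right (by linarith [ht.1]) hC₂0
        _ = C₂ := one_mul _
    have stepM : ∫ s in t..(1/2:ℝ), s ^ e * ∫ u in s..(1/2:ℝ), ψ₁ u ≤ A := by
      have hp := partsP hb hψ₁c hψ₁0 e ht
      have heq : ∫ s in t..(1/2:ℝ), ψ₁ s * s ^ (e+1) = ∫ s in t..(1/2:ℝ), ψ₂ s := by
        apply intervalIntegral.integral_congr
        intro s _
        rw [hψ₁, hψ₂]
        ring
      rw [heq] at hp
      refine le_trans hp (h1e _ (by positivity) (by linarith [Nat.cast_nonneg (α := ℝ) e]) _ ?_)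
      exact hAt t ht
    linarith
  -- Part 1
  have hf₁c : ContinuousOn (fun s => G s * s ^ e) (Ioc 0 (1/2:ℝ)) :=
    hGc.mul (continuous_pow e).continuousOn
  have hf₁0 : ∀ s ∈ Ioc (0:ℝ) (1/2), 0 ≤ G s * s ^ e := fun s hs =>
    mul_nonneg (hG0 s hs) (pow_nonneg hs.1.le e)
  have hlint1 : ∫⁻ t in Ioc (0:ℝ) (1/2), ENNReal.ofReal (G t * t ^ e) < ⊤ :=
    lt_of_le_of_lt (boundLint hb hf₁c hf₁0 hB1) ENNReal.ofReal_lt_top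
  have part1 : ∫⁻ t in Ioc (0:ℝ) (1/2), ENNReal.ofReal (G t * t ^ (((e+3:ℕ):ℝ) - 3)) < ⊤ := by
    refine lt_of_eq_of_lt ?_ hlint1
    apply setLIntegral_congr_fun measurableSet_Ioc
    exact fun t ht => by beta_reduce; rw [hc3 t ht.1]
  refine ⟨part1, ?_⟩
  -- integrability of G t * t^e
  have If₁ : IntegrableOn (fun t => G t * t ^ e) (Ioc (0:ℝ) (1/2)) := by
    refine ⟨hf₁c.aestronglyMeasurable measurableSet_Ioc, ?_⟩
    rw [hasFiniteIntegral_iff_ofReal (ae_restrict_of_forall_mem measurableSet_Ioc hf₁0)]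
    exact hlint1
  -- uniform bound for ∫ |G' s| * s^(e+1) and integrability
  have hf₂c : ContinuousOn (fun s => |G' s| * s ^ (e+1)) (Ioc 0 (1/2:ℝ)) :=
    hG'c.abs.mul (continuous_pow (e+1)).continuousOn
  have hf₂0 : ∀ s ∈ Ioc (0:ℝ) (1/2), 0 ≤ |G' s| * s ^ (e+1) := fun s hs =>
    mul_nonneg (abs_nonneg _) (pow_nonneg hs.1.le _)
  have hB2 : ∀ t ∈ Ioc (0:ℝ) (1/2),
      ∫ s in t..(1/2:ℝ), |G' s| * s ^ (e+1) ≤ |G' (1/2)| + A := by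
    intro t ht
    have hIcc : Icc t (1/2:ℝ) ⊆ Ioc 0 (1/2) := fun x hx => ⟨lt_of_lt_of_le ht.1 hx.1, hx.2⟩
    have hNc : ContinuousOn (fun s => ∫ u in s..(1/2:ℝ), |G'' u|) (Icc t (1/2)) :=
      contPrim ht.2 (habs.mono hIcc)
    have hint1 : IntervalIntegrable (fun s => |G' s| * s ^ (e+1)) volume t (1/2) := by
      apply ContinuousOn.intervalIntegrable
      rw [uIcc_of_le ht.2]
      exact hf₂c.mono hIcc
    have hintC : IntervalIntegrable (fun s => |G' (1/2)| * s ^ (e+1)) volume t (1/2) :=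
      ((continuous_pow (e+1)).intervalIntegrable t (1/2)).const_mul _
    have hintN : IntervalIntegrable (fun s => s ^ (e+1) * ∫ u in s..(1/2:ℝ), |G'' u|)
        volume t (1/2) := by
      apply ContinuousOn.intervalIntegrable
      rw [uIcc_of_le ht.2]
      exact (continuous_pow (e+1)).continuousOn.mul hNc
    have step1 : ∫ s in t..(1/2:ℝ), |G' s| * s ^ (e+1)
        ≤ ∫ s in t..(1/2:ℝ),
            (|G' (1/2)| * s ^ (e+1) + s ^ (e+1) * ∫ u in s..(1/2:ℝ), |G'' u|) := by
      apply intervalIntegral.integral_mono_on ht.2 hint1 (hintC.add hintN)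
      intro s hs
      have hs0 : 0 < s := lt_of_lt_of_le ht.1 hs.1
      have := hG'bd s (hIcc hs)
      nlinarith [pow_nonneg hs0.le (e+1)]
    rw [intervalIntegral.integral_add hintC hintN] at step1
    have stepC : ∫ s in t..(1/2:ℝ), |G' (1/2)| * s ^ (e+1) ≤ |G' (1/2)| := by
      have hmono : ∫ s in t..(1/2:ℝ), |G' (1/2)| * s ^ (e+1)
          ≤ ∫ s in t..(1/2:ℝ), |G' (1/2)| := by
        apply intervalIntegral.integral_mono_on ht.2 hintC intervalIntegrable_const
        intro s hs
        have hs0 : 0 < s := lt_of_lt_of_le ht.1 hs.1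
        have hse : s ^ (e+1) ≤ 1 := by
          calc s ^ (e+1) ≤ 1 ^ (e+1) := pow_le_pow_left₀ hs0.le (by linarith [hs.2]) (e+1)
            _ = 1 := one_pow _
        nlinarith [abs_nonneg (G' (1/2))]
      have heq : ∫ s in t..(1/2:ℝ), |G' (1/2)| = (1/2 - t) * |G' (1/2)| := by
        rw [intervalIntegral.integral_const, smul_eq_mul]
      rw [heq] at hmono
      calc ∫ s in t..(1/2:ℝ), |G' (1/2)| * s ^ (e+1) ≤ (1/2 - t) * |G' (1/2)| := hmono
        _ ≤ 1 * |G' (1/2)| := mul_le_mul_of_nonneg_right (by linarith [ht.1]) (abs_nonneg _)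
        _ = |G' (1/2)| := one_mul _
    have stepN : ∫ s in t..(1/2:ℝ), s ^ (e+1) * ∫ u in s..(1/2:ℝ), |G'' u| ≤ A := by
      have hp := partsP hb habs (fun u _ => abs_nonneg _) (e+1) ht
      have heq : ∫ s in t..(1/2:ℝ), |G'' s| * s ^ (e+1+1) = ∫ s in t..(1/2:ℝ), ψ₂ s := by
        apply intervalIntegral.integral_congr
        intro s _
        rw [hψ₂]
      rw [heq] at hp
      refine le_trans hp ?_
      have hcast : ((e+1:ℕ):ℝ) + 1 = (e:ℝ) + 2 := by push_cast; ring
      rw [hcast]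
      exact h1e _ (by positivity) (by linarith [Nat.cast_nonneg (α := ℝ) e]) _ (hAt t ht)
    linarith
  have If₂abs : IntegrableOn (fun s => |G' s| * s ^ (e+1)) (Ioc (0:ℝ) (1/2)) := by
    refine ⟨hf₂c.aestronglyMeasurable measurableSet_Ioc, ?_⟩
    rw [hasFiniteIntegral_iff_ofReal (ae_restrict_of_forall_mem measurableSet_Ioc hf₂0)]
    exact lt_of_le_of_lt (boundLint hb hf₂c hf₂0 hB2) ENNReal.ofReal_lt_top
  have If₂ : IntegrableOn (fun s => G' s * s ^ (e+1)) (Ioc (0:ℝ) (1/2)) := by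
    apply Integrable.mono' If₂abs
      ((hG'c.mul (continuous_pow (e+1)).continuousOn).aestronglyMeasurable measurableSet_Ioc)
    apply ae_restrict_of_forall_mem measurableSet_Ioc
    intro s hs
    rw [Real.norm_eq_abs, Pi.mul_apply, abs_mul, abs_pow, abs_of_pos hs.1]
  -- the derivative of H t = G t * t^(e+1)
  set D : ℝ → ℝ := fun s => G' s * s ^ (e+1) + ((e:ℝ)+1) * (G s * s ^ e) with hD
  have ID : IntegrableOn D (Ioc (0:ℝ) (1/2)) := If₂.add (If₁.const_mul _)
  have ID_Icc : IntegrableOn D (Icc (0:ℝ) (1/2)) := by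
    rwa [integrableOn_Icc_iff_integrableOn_Ioc]
  have hDc : ContinuousOn D (Ioc 0 (1/2:ℝ)) := by
    apply ContinuousOn.add
    · exact hG'c.mul (continuous_pow (e+1)).continuousOn
    · exact continuousOn_const.mul (hGc.mul (continuous_pow e).continuousOn)
  have hHc : ContinuousOn (fun t => G t * t ^ (e+1)) (Ioc 0 (1/2:ℝ)) :=
    hGc.mul (continuous_pow (e+1)).continuousOn
  have hHd : ∀ s ∈ Ioo (0:ℝ) (1/2), HasDerivAt (fun t => G t * t ^ (e+1)) (D s) s := by
    intro s hs
    have h := (hGd s hs).mul (hasDerivAt_pow (e+1) s)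
    refine h.congr_deriv ?_
    show _ = G' s * s ^ (e+1) + ((e:ℝ)+1) * (G s * s ^ e)
    simp only [Nat.add_sub_cancel]
    push_cast
    ring
  have hHFTC : ∀ t ∈ Ioc (0:ℝ) (1/2),
      ∫ s in t..(1/2:ℝ), D s = G (1/2) * (1/2:ℝ) ^ (e+1) - G t * t ^ (e+1) :=
    fun t ht => ftcIoc hHc hHd hDc ht
  -- the primitive F
  set F : ℝ → ℝ := fun x => ∫ u in (0:ℝ)..x, D u with hF
  have hFc : ContinuousOn F (Icc 0 (1/2:ℝ)) := by
    have := intervalIntegral.continuousOn_primitive_interval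
      (show IntegrableOn D (uIcc 0 (1/2:ℝ)) by rwa [uIcc_of_le hb.le])
    rwa [uIcc_of_le hb.le] at this
  have hF0 : Tendsto F (𝓝[>] (0:ℝ)) (𝓝 0) := by
    have h := hFc 0 ⟨le_rfl, hb.le⟩
    have hF00 : F 0 = 0 := intervalIntegral.integral_same
    rw [← nhdsWithin_Ioc_eq_nhdsGT hb]
    have := h.tendsto
    rw [hF00] at this
    exact this.mono_left (nhdsWithin_mono 0 Ioc_subset_Icc_self)
  -- H t = const + F t on Ioc
  set L : ℝ := G (1/2) * (1/2:ℝ) ^ (e+1) - ∫ u in (0:ℝ)..(1/2:ℝ), D u with hL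
  have hHeq : ∀ t ∈ Ioc (0:ℝ) (1/2), G t * t ^ (e+1) = L + F t := by
    intro t ht
    have i1 : IntervalIntegrable D volume 0 t := by
      apply IntegrableOn.intervalIntegrable
      rw [uIcc_of_le ht.1.le]
      exact ID_Icc.mono_set (Icc_subset_Icc le_rfl ht.2)
    have i2 : IntervalIntegrable D volume t (1/2) := by
      apply IntegrableOn.intervalIntegrable
      rw [uIcc_of_le ht.2]
      exact ID_Icc.mono_set (Icc_subset_Icc ht.1.le le_rfl)
    have hadd : (∫ u in (0:ℝ)..t, D u) + (∫ u in t..(1/2:ℝ), D u)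
        = ∫ u in (0:ℝ)..(1/2:ℝ), D u :=
      intervalIntegral.integral_add_adjacent_intervals i1 i2
    have := hHFTC t ht
    rw [hL, hF]
    linarith
  refine ⟨L, ?_⟩
  have htend : Tendsto (fun t => L + F t) (𝓝[>] (0:ℝ)) (𝓝 (L + 0)) :=
    tendsto_const_nhds.add hF0
  rw [add_zero] at htend
  apply htend.congr'
  filter_upwards [Ioc_mem_nhdsGT_of_mem (⟨le_rfl, hb⟩ : (0:ℝ) ∈ Ico 0 (1/2:ℝ))] with t ht
  rw [← hHeq t ht, hc2 t ht.1]
end
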